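/- arXiv:1210.0181 — 4 statements merged into one kernel-verified Lean document; each statement's English description precedes it below -/
import Mathlib

section
/- Assume E is unbounded and fix p ∈ (1,2]. For Q ∈ 𝔻 and x ∈ Q set g_Q(x) := (∬_{Γ_Q(x)} |Θ1(Y)|² dY / δ(Y)^{n+1})^{p/2}. If there exist N ∈ (0,∞) and β ∈ (0,1) such that σ({x ∈ Q : g_Q(x) > N}) ≤ (1−β) σ(Q) for every Q ∈ 𝔻, then sup_{Q ∈ 𝔻} σ(Q)^{-1} ∫_Q ∬_{Γ_Q(x)} |Θ1(Y)|² dY / δ(Y)^{n+1} dσ(x) ≤ ((2−β)/β) N^{2/p}. -/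
open MeasureTheory Metric Set ENNReal NNReal

noncomputable section

namespace LocalTb

/-- The ambient Euclidean space `ℝ^{n+1}`. -/
abbrev Amb (n : ℕ) := EuclideanSpace ℝ (Fin (n + 1))

variable {n : ℕ} {E : Set (Amb n)}

/-- `σ`, the restriction of `n`-dimensional Hausdorff measure to `E`. -/
def sigmaE (n : ℕ) (E : Set (Amb n)) : Measure (Amb n) := μH[(n : ℝ)].restrict E

/-- `δ(X) = dist(X, E)`. -/
def del (E : Set (Amb n)) (X : Amb n) : ℝ := Metric.infDist X E

/-- `E` is a closed `n`-dimensional Ahlfors-David regular set with constant `CE`. -/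
def IsADR (n : ℕ) (E : Set (Amb n)) (CE : ℝ) : Prop :=
  IsClosed E ∧ 1 ≤ CE ∧
  ∀ x ∈ E, ∀ r : ℝ, 0 < r → ENNReal.ofReal r < EMetric.diam E →
    ENNReal.ofReal (CE⁻¹ * r ^ n) ≤ sigmaE n E (ball x r) ∧
      sigmaE n E (ball x r) ≤ ENNReal.ofReal (CE * r ^ n)

/-- The operator `Θ f (X) = ∫_E ψ(X,y) f(y) dσ(y)`. -/
def Theta (n : ℕ) (E : Set (Amb n)) (ψ : Amb n → Amb n → ℂ) (f : Amb n → ℂ)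
    (X : Amb n) : ℂ :=
  ∫ y, ψ X y * f y ∂(sigmaE n E)

/-- The standard size and Hölder conditions on the kernel `ψ`, with exponent `α` and
constant `Cψ`, on `Ω × E` where `Ω = ℝ^{n+1} \ E`. -/
def KernelCond (n : ℕ) (E : Set (Amb n)) (ψ : Amb n → Amb n → ℂ) (α Cψ : ℝ) : Prop :=
  0 < α ∧ 0 < Cψ ∧ Measurable (Function.uncurry ψ) ∧
  (∀ X, X ∉ E → ∀ y ∈ E,
    ‖ψ X y‖ ≤ Cψ * del E X ^ α / dist X y ^ ((n : ℝ) + α)) ∧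
  (∀ X, X ∉ E → ∀ y ∈ E, ∀ y' ∈ E, 2 * dist y y' ≤ dist X y →
    ‖ψ X y - ψ X y'‖ ≤ Cψ * dist y y' ^ α / dist X y ^ ((n : ℝ) + α))

/-- A dyadic grid (Christ-David cubes) on `E`. -/
structure DyadicGrid (n : ℕ) (E : Set (Amb n)) where
  Dk : ℤ → Set (Set (Amb n))
  α₀ : ℝ
  η₀ : ℝ
  C₁ : ℝ
  C₂ : ℝ
  α₀_pos : 0 < α₀
  η₀_mem : η₀ ∈ Set.Ioc (0 : ℝ) 1
  C₁_pos : 0 < C₁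
  C₂_pos : 0 < C₂
  scale_admissible : ∀ k : ℤ, (Dk k).Nonempty →
    ENNReal.ofReal ((2 : ℝ) ^ (-k)) < EMetric.diam E
  measurableSet : ∀ k, ∀ Q ∈ Dk k, MeasurableSet Q
  subset_E : ∀ k, ∀ Q ∈ Dk k, Q ⊆ E
  cover : ∀ k : ℤ, ENNReal.ofReal ((2 : ℝ) ^ (-k)) < EMetric.diam E → ⋃₀ Dk k = E
  pairwise_disj : ∀ k, ∀ Q ∈ Dk k, ∀ Q' ∈ Dk k, Q ≠ Q' → Q ∩ Q' = ∅
  nested : ∀ ⦃k k' : ℤ⦄, k < k' → ∀ Q ∈ Dk k, ∀ Q' ∈ Dk k', Q' ⊆ Q ∨ Q' ∩ Q = ∅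
  parent_unique : ∀ ⦃k k' : ℤ⦄, k < k' →
    ENNReal.ofReal ((2 : ℝ) ^ (-k)) < EMetric.diam E →
    ∀ Q' ∈ Dk k', ∃! Q, Q ∈ Dk k ∧ Q' ⊆ Q
  diam_bound : ∀ k, ∀ Q ∈ Dk k,
    ENNReal.ofReal (C₁⁻¹ * (2 : ℝ) ^ (-k)) ≤ EMetric.diam Q ∧
      EMetric.diam Q ≤ ENNReal.ofReal (C₁ * (2 : ℝ) ^ (-k))
  meas_bound : ∀ k, ∀ Q ∈ Dk k,
    ENNReal.ofReal (C₁⁻¹ * (2 : ℝ) ^ (-(k * (n : ℤ)))) ≤ sigmaE n E Q ∧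
      sigmaE n E Q ≤ ENNReal.ofReal (C₁ * (2 : ℝ) ^ (-(k * (n : ℤ))))
  surface_ball : ∀ k, ∀ Q ∈ Dk k, ∃ x ∈ Q, ball x (α₀ * (2 : ℝ) ^ (-k)) ∩ E ⊆ Q
  thin_boundary : ∀ k, ∀ Q ∈ Dk k, ∀ τ ∈ Set.Ioo (0 : ℝ) α₀,
    sigmaE n E {x ∈ Q | Metric.infDist x (E \ Q) ≤ τ * (2 : ℝ) ^ (-k)} ≤
      ENNReal.ofReal (C₂ * τ ^ η₀) * sigmaE n E Q

/-- The distance between two sets. -/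
def setDist (A B : Set (Amb n)) : ℝ := (⨅ x ∈ A, EMetric.infEdist x B).toReal

/-- The closed axis-parallel cube centered at `c` with side length `2^{-m}`. -/
def closedCube (c : Amb n) (m : ℤ) : Set (Amb n) :=
  {Y | ∀ i, |Y i - c i| ≤ (2 : ℝ) ^ (-m) / 2}

/-- The concentric dilate `tI` of the cube `closedCube c m`. -/
def dilCube (c : Amb n) (m : ℤ) (t : ℝ) : Set (Amb n) :=
  {Y | ∀ i, |Y i - c i| ≤ t * ((2 : ℝ) ^ (-m) / 2)}

/-- A Whitney decomposition of `Ω = ℝ^{n+1} \ E`: a family of closed cubes with dyadic side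
lengths (a cube is recorded as its center together with the scale `m`, the side being
`2^{-m}`), with pairwise disjoint interiors, covering `Ω`, and at the right distance
from `E`. -/
structure Whitney (n : ℕ) (E : Set (Amb n)) where
  cubes : Set (Amb n × ℤ)
  disj_int : ∀ p ∈ cubes, ∀ q ∈ cubes, p ≠ q →
    interior (closedCube p.1 p.2) ∩ interior (closedCube q.1 q.2) = ∅
  covers : (⋃ p ∈ cubes, closedCube p.1 p.2) = Eᶜ
  dist_lower : ∀ p ∈ cubes,
    4 * Metric.diam (closedCube p.1 p.2) ≤ setDist (dilCube p.1 p.2 4) E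
  dist_mid : ∀ p ∈ cubes, setDist (dilCube p.1 p.2 4) E ≤ setDist (closedCube p.1 p.2) E
  dist_upper : ∀ p ∈ cubes,
    setDist (closedCube p.1 p.2) E ≤ 40 * Metric.diam (closedCube p.1 p.2)

/-- The Whitney cubes `I` entering the Whitney region of a dyadic cube `Q` of
generation `k` (so that `ℓ(Q) = 2^{-k}`), with aperture `β`:
`ℓ(I)/8 ≤ ℓ(Q) ≤ 8 ℓ(I)` and `dist(Q,I) ≤ β ℓ(Q)`. -/
def whitneyIdx (W : Whitney n E) (β : ℝ) (k : ℤ) (Q : Set (Amb n)) : Set (Amb n × ℤ) :=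
  {p ∈ W.cubes | (2 : ℝ) ^ (-p.2) / 8 ≤ (2 : ℝ) ^ (-k) ∧
    (2 : ℝ) ^ (-k) ≤ 8 * (2 : ℝ) ^ (-p.2) ∧
    setDist Q (closedCube p.1 p.2) ≤ β * (2 : ℝ) ^ (-k)}

/-- The Whitney region `U_Q` of a dyadic cube `Q` of generation `k`. -/
def UQ (W : Whitney n E) (β : ℝ) (k : ℤ) (Q : Set (Amb n)) : Set (Amb n) :=
  ⋃ p ∈ whitneyIdx W β k Q, closedCube p.1 p.2

/-- The truncated cone `Γ_Q(x)`. -/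
def cone (G : DyadicGrid n E) (W : Whitney n E) (β : ℝ) (Q : Set (Amb n))
    (x : Amb n) : Set (Amb n) :=
  ⋃ (k' : ℤ), ⋃ Q' ∈ {Q' ∈ G.Dk k' | x ∈ Q' ∧ Q' ⊆ Q}, UQ W β k' Q'

/-- The good sawtooth cone `γ_Q(x)` relative to a family `F` of (dyadic cube, scale)
pairs: the union of Whitney regions of good subcubes `Q' ⊆ Q` containing `x`, i.e.
those such that whenever `Q'` meets some `Q_k ∈ F` then `ℓ(Q') > ℓ(Q_k)`. -/
def goodCone (G : DyadicGrid n E) (W : Whitney n E) (β : ℝ)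
    (F : Set (Set (Amb n) × ℤ)) (Q : Set (Amb n)) (x : Amb n) : Set (Amb n) :=
  ⋃ (k' : ℤ), ⋃ Q' ∈ {Q' ∈ G.Dk k' | x ∈ Q' ∧ Q' ⊆ Q ∧
      ∀ q ∈ F, (Q' ∩ q.1).Nonempty → (2 : ℝ) ^ (-q.2) < (2 : ℝ) ^ (-k')}, UQ W β k' Q'

/-- The conical square function `∬_{Γ_Q(x)} |Θ f(Y)|² dY/δ(Y)^{n+1}`. -/
def coneSq (G : DyadicGrid n E) (W : Whitney n E) (β : ℝ)
    (ψ : Amb n → Amb n → ℂ) (f : Amb n → ℂ) (Q : Set (Amb n)) (x : Amb n) : ℝ≥0∞ :=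
  ∫⁻ Y in cone G W β Q x,
    (‖Theta n E ψ f Y‖₊ : ℝ≥0∞) ^ 2 / ENNReal.ofReal (del E Y ^ (n + 1)) ∂volume

/-- The sawtooth conical square function `∬_{γ_Q(x)} |Θ f(Y)|² dY/δ(Y)^{n+1}`. -/
def goodConeSq (G : DyadicGrid n E) (W : Whitney n E) (β : ℝ)
    (ψ : Amb n → Amb n → ℂ) (F : Set (Set (Amb n) × ℤ)) (f : Amb n → ℂ)
    (Q : Set (Amb n)) (x : Amb n) : ℝ≥0∞ :=
  ∫⁻ Y in goodCone G W β F Q x,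
    (‖Theta n E ψ f Y‖₊ : ℝ≥0∞) ^ 2 / ENNReal.ofReal (del E Y ^ (n + 1)) ∂volume

/-- The dyadic Hardy-Littlewood maximal operator (acting on `ℝ≥0∞`-valued functions). -/
def dyadicMax (G : DyadicGrid n E) (g : Amb n → ℝ≥0∞) (x : Amb n) : ℝ≥0∞ :=
  ⨆ (k : ℤ) (Q : Set (Amb n)) (_ : Q ∈ G.Dk k) (_ : x ∈ Q),
    (sigmaE n E Q)⁻¹ * ∫⁻ y in Q, g y ∂(sigmaE n E)

/-!
Put `λ = N^{2/p}` and let `g_M(Q, x)` be the mass of the part of `Γ_Q(x)` built from cubes of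
generation at most `M`. In `Q₀`, the good set `F` where the full cone has mass `≤ λ` satisfies
`σ(Q₀ \ F) ≤ (1 - β') σ(Q₀)`; stop at the maximal subcubes of `Q₀` missing `F`. Off the stopping
cubes, the truncated cone of `x` equals that of a point of `F`, so `g_M(Q₀, x) ≤ λ`. On a
stopping cube `S`, the part of the cone above `S` is seen from a point of `F` in the parent of
`S`, so `g_M(Q₀, ·) ≤ λ + g_M(S, ·)`. By induction on `M - k₀`,
`∫_{Q₀} g_M(Q₀, ·) ≤ λ σ(Q₀) + (λ + C)(1 - β') σ(Q₀) = C σ(Q₀)` with `C = (2 - β') λ / β'`,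
and monotone convergence in `M` removes the truncation. Truncating also makes `g_M(Q₀, ·)`
constant on the cubes of generation `M`, which is where its measurability comes from.
-/

section MeasureLemmas

variable {α : Type*} [MeasurableSpace α] {μ : Measure α}

theorem setLIntegral_le_of_le_of_notMem_iUnion {ι : Type*} [Countable ι] {s : Set α}
    (hs : MeasurableSet s) {A : ι → Set α} (hA : ∀ i, MeasurableSet (A i)) {f : α → ℝ≥0∞}
    {c : ℝ≥0∞} (hf : ∀ x ∈ s \ ⋃ i, A i, f x ≤ c) :
    ∫⁻ x in s, f x ∂μ ≤ c * μ s + ∑' i, ∫⁻ x in A i, f x ∂μ := by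
  have hgood : ∫⁻ x in s \ ⋃ i, A i, f x ∂μ ≤ c * μ s :=
    calc ∫⁻ x in s \ ⋃ i, A i, f x ∂μ ≤ ∫⁻ _ in s \ ⋃ i, A i, c ∂μ :=
          setLIntegral_mono' (hs.diff (MeasurableSet.iUnion hA)) hf
      _ = c * μ (s \ ⋃ i, A i) := setLIntegral_const _ c
      _ ≤ c * μ s := by gcongr; exact sdiff_subset
  calc ∫⁻ x in s, f x ∂μ ≤ ∫⁻ x in (s \ ⋃ i, A i) ∪ ⋃ i, A i, f x ∂μ :=
        lintegral_mono_set (by rw [sdiff_union_self]; exact subset_union_left)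
    _ ≤ ∫⁻ x in s \ ⋃ i, A i, f x ∂μ + ∫⁻ x in ⋃ i, A i, f x ∂μ := lintegral_union_le _ _ _
    _ ≤ c * μ s + ∑' i, ∫⁻ x in A i, f x ∂μ := add_le_add hgood (lintegral_iUnion_le _ _)

theorem inter_nonempty_of_measure_diff_le {s F : Set α} {t : ℝ≥0∞} (hs₀ : μ s ≠ 0)
    (hs : μ s ≠ ⊤) (ht : t < 1) (h : μ (s \ F) ≤ t * μ s) : (s ∩ F).Nonempty := by
  by_contra hempty
  have hsub : s ⊆ s \ F := fun x hx => ⟨hx, fun hxF => hempty ⟨x, hx, hxF⟩⟩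
  have hlt := ENNReal.mul_lt_mul_left hs₀ hs ht
  rw [one_mul] at hlt
  exact ((measure_mono hsub).trans h).not_gt hlt

end MeasureLemmas

theorem ofReal_lt_rpow_iff {x q : ℝ} (hx : 0 < x) (hq : 0 < q) {a : ℝ≥0∞} :
    ENNReal.ofReal x < a ^ q ↔ ENNReal.ofReal (x ^ q⁻¹) < a := by
  rw [← ENNReal.rpow_inv_lt_iff hq, ENNReal.ofReal_rpow_of_pos hx]

namespace DyadicGrid

variable (G : DyadicGrid n E)

theorem exists_mem_of_ediam_eq_top (hdiam : Metric.ediam E = ⊤) (k : ℤ) {x : Amb n}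
    (hx : x ∈ E) : ∃ S ∈ G.Dk k, x ∈ S := by
  rw [← G.cover k (ENNReal.ofReal_lt_top.trans_eq hdiam.symm)] at hx
  exact hx

variable {G}

theorem eq_of_mem {k : ℤ} {Q Q' : Set (Amb n)} (hQ : Q ∈ G.Dk k) (hQ' : Q' ∈ G.Dk k)
    {x : Amb n} (hx : x ∈ Q) (hx' : x ∈ Q') : Q = Q' := by
  by_contra hne
  exact (eq_empty_iff_forall_notMem.1 (G.pairwise_disj k Q hQ Q' hQ' hne)) x ⟨hx, hx'⟩

theorem subset_of_le {k k' : ℤ} (hkk' : k ≤ k') {Q S : Set (Amb n)} (hQ : Q ∈ G.Dk k)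
    (hS : S ∈ G.Dk k') {x : Amb n} (hxQ : x ∈ Q) (hxS : x ∈ S) : S ⊆ Q := by
  rcases hkk'.lt_or_eq with hlt | rfl
  · exact (G.nested hlt Q hQ S hS).resolve_right fun h =>
      (eq_empty_iff_forall_notMem.1 h) x ⟨hxS, hxQ⟩
  · exact (eq_of_mem hS hQ hxS hxQ).subset

theorem measure_ne_top {k : ℤ} {Q : Set (Amb n)} (hQ : Q ∈ G.Dk k) : sigmaE n E Q ≠ ⊤ :=
  ((G.meas_bound k Q hQ).2.trans_lt ENNReal.ofReal_lt_top).ne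

theorem measure_pos {k : ℤ} {Q : Set (Amb n)} (hQ : Q ∈ G.Dk k) : 0 < sigmaE n E Q :=
  (ENNReal.ofReal_pos.2 (mul_pos (inv_pos.2 G.C₁_pos) (zpow_pos two_pos _))).trans_le
    (G.meas_bound k Q hQ).1

theorem finite_subcubes {k : ℤ} {Q : Set (Amb n)} (hQ : Q ∈ G.Dk k) (j : ℤ) :
    {S | S ∈ G.Dk j ∧ S ⊆ Q}.Finite := by
  set 𝒮 := {S | S ∈ G.Dk j ∧ S ⊆ Q}
  have hdisj : Pairwise (Function.onFun Disjoint fun S : 𝒮 => (S : Set (Amb n))) := fun S S' hne =>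
    disjoint_iff_inter_eq_empty.2
      (G.pairwise_disj j S S.2.1 S' S'.2.1 (Subtype.coe_injective.ne hne))
  have hfin := Measure.finite_const_le_meas_of_disjoint_iUnion (sigmaE n E)
    (ENNReal.ofReal_pos.2 (mul_pos (inv_pos.2 G.C₁_pos) (zpow_pos two_pos (-(j * n)))))
    (fun S : 𝒮 => G.measurableSet j S S.2.1) hdisj
    (ne_top_of_le_ne_top (measure_ne_top hQ) (measure_mono (iUnion_subset fun S => S.2.2)))
  have : Finite 𝒮 := finite_univ_iff.1 (hfin.subset fun S _ => (G.meas_bound j S S.2.1).1)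
  exact toFinite 𝒮

theorem measurable_indicator_of_forall_eq (hdiam : Metric.ediam E = ⊤) {k M : ℤ}
    (hkM : k ≤ M) {Q : Set (Amb n)} (hQ : Q ∈ G.Dk k) {f : Amb n → ℝ≥0∞}
    (hf : ∀ S ∈ G.Dk M, ∀ x ∈ S, ∀ y ∈ S, f x = f y) : Measurable (Q.indicator f) := by
  refine measurable_of_Ioi fun t => ?_
  have hpre : Q.indicator f ⁻¹' Ioi t = ⋃ S ∈ {S | S ∈ G.Dk M ∧ S ⊆ Q ∧ ∃ y ∈ S, t < f y}, S := by
    ext x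
    simp only [mem_preimage, mem_Ioi, mem_iUnion₂, mem_ofPred_eq, exists_prop]
    constructor
    · intro hx
      have hxQ : x ∈ Q := by
        by_contra hxQ
        simp [indicator_of_notMem hxQ] at hx
      rw [indicator_of_mem hxQ] at hx
      obtain ⟨S, hS, hxS⟩ := G.exists_mem_of_ediam_eq_top hdiam M (G.subset_E k Q hQ hxQ)
      exact ⟨S, ⟨hS, subset_of_le hkM hQ hS hxQ hxS, x, hxS, hx⟩, hxS⟩
    · rintro ⟨S, ⟨hS, hSQ, y, hyS, hy⟩, hxS⟩
      rwa [indicator_of_mem (hSQ hxS), hf S hS x hxS y hyS]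
  rw [hpre]
  exact ((finite_subcubes hQ M).subset fun S hS => ⟨hS.1, hS.2.1⟩).measurableSet_biUnion
    fun S hS => G.measurableSet M S hS.1

end DyadicGrid

section Cones

variable {X : Type*} (G : DyadicGrid n E) (R : ℤ → Set (Amb n) → Set X)

def dyadicCone (K : Set ℤ) (Q : Set (Amb n)) (x : Amb n) : Set X :=
  ⋃ k ∈ K, ⋃ Q' ∈ {Q' ∈ G.Dk k | x ∈ Q' ∧ Q' ⊆ Q}, R k Q'

variable {G R} in
theorem mem_dyadicCone {K : Set ℤ} {Q : Set (Amb n)} {x : Amb n} {Y : X} :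
    Y ∈ dyadicCone G R K Q x ↔ ∃ k ∈ K, ∃ Q' ∈ G.Dk k, x ∈ Q' ∧ Q' ⊆ Q ∧ Y ∈ R k Q' := by
  simp only [dyadicCone, mem_iUnion₂, mem_sep_iff, exists_prop, and_assoc]

theorem cone_eq_dyadicCone (W : Whitney n E) (β : ℝ) (Q : Set (Amb n)) (x : Amb n) :
    cone G W β Q x = dyadicCone G (UQ W β) univ Q x := by
  ext Y
  simp only [cone, mem_dyadicCone, mem_iUnion, mem_sep_iff, mem_univ, true_and,
    exists_prop, and_assoc]

theorem dyadicCone_mono {K K' : Set ℤ} (h : K ⊆ K') (Q : Set (Amb n)) (x : Amb n) :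
    dyadicCone G R K Q x ⊆ dyadicCone G R K' Q x :=
  biUnion_subset_biUnion_left h

theorem iUnion_dyadicCone_Iic (k : ℤ) (Q : Set (Amb n)) (x : Amb n) :
    ⋃ d : ℕ, dyadicCone G R (Iic (k + d)) Q x = dyadicCone G R univ Q x := by
  refine (iUnion_subset fun d => dyadicCone_mono G R (subset_univ _) Q x).antisymm
    fun Y hY => ?_
  obtain ⟨k', -, hk'⟩ := mem_dyadicCone.1 hY
  exact mem_iUnion.2 ⟨(k' - k).toNat, mem_dyadicCone.2 ⟨k', by rw [mem_Iic]; omega, hk'⟩⟩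

theorem dyadicCone_Iic_congr {M : ℤ} {S : Set (Amb n)} (hS : S ∈ G.Dk M) {x y : Amb n}
    (hx : x ∈ S) (hy : y ∈ S) (Q : Set (Amb n)) :
    dyadicCone G R (Iic M) Q x = dyadicCone G R (Iic M) Q y := by
  have key : ∀ {u v}, u ∈ S → v ∈ S → dyadicCone G R (Iic M) Q u ⊆ dyadicCone G R (Iic M) Q v := by
    intro u v hu hv Y hY
    obtain ⟨k, hk, Q', hQ', huQ', hQ'Q, hY⟩ := mem_dyadicCone.1 hY
    exact mem_dyadicCone.2 ⟨k, hk, Q', hQ', DyadicGrid.subset_of_le hk hQ' hS huQ' hu hv, hQ'Q, hY⟩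
  exact (key hx hy).antisymm (key hy hx)

theorem dyadicCone_Iic_subset_union {j M : ℤ} {S : Set (Amb n)} (hS : S ∈ G.Dk j) {x : Amb n}
    (hx : x ∈ S) (Q : Set (Amb n)) :
    dyadicCone G R (Iic M) Q x ⊆ dyadicCone G R (Iic (j - 1)) Q x ∪ dyadicCone G R (Iic M) S x := by
  intro Y hY
  obtain ⟨k, hk, Q', hQ', hxQ', hQ'Q, hY⟩ := mem_dyadicCone.1 hY
  rcases lt_or_ge k j with hkj | hjk
  · exact Or.inl (mem_dyadicCone.2 ⟨k, Int.le_sub_one_of_lt hkj, Q', hQ', hxQ', hQ'Q, hY⟩)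
  · exact Or.inr (mem_dyadicCone.2
      ⟨k, hk, Q', hQ', hxQ', DyadicGrid.subset_of_le hjk hS hQ' hx hxQ', hY⟩)

/-- The maximal subcubes of `Q₀` missing `F`, of generation in `(k₀, M]`. They are indexed by
their generation, since a set may be a dyadic cube of several generations. -/
def stoppingCubes (F : Set (Amb n)) (k₀ M : ℤ) (Q₀ : Set (Amb n)) : Set (ℤ × Set (Amb n)) :=
  {q | k₀ < q.1 ∧ q.1 ≤ M ∧ q.2 ∈ G.Dk q.1 ∧ q.2 ⊆ Q₀ ∧ Disjoint q.2 F ∧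
    ∃ P ∈ G.Dk (q.1 - 1), q.2 ⊆ P ∧ (P ∩ F).Nonempty}

theorem stoppingCubes_pairwiseDisjoint (F : Set (Amb n)) (k₀ M : ℤ) (Q₀ : Set (Amb n)) :
    (stoppingCubes G F k₀ M Q₀).PairwiseDisjoint Prod.snd := by
  have hlt : ∀ q ∈ stoppingCubes G F k₀ M Q₀, ∀ q' ∈ stoppingCubes G F k₀ M Q₀,
      q.1 < q'.1 → Disjoint q.2 q'.2 := by
    rintro ⟨j, S⟩ ⟨-, -, hS, -, hSF, -⟩ ⟨j', S'⟩ ⟨-, -, -, -, -, P', hP', hS'P', y, hyP', hyF⟩ hjj'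
    refine disjoint_left.2 fun x hxS hxS' => disjoint_left.1 hSF ?_ hyF
    exact DyadicGrid.subset_of_le (Int.le_sub_one_of_lt hjj') hS hP' hxS (hS'P' hxS') hyP'
  rintro ⟨j, S⟩ hq ⟨j', S'⟩ hq' hne
  rcases lt_trichotomy j j' with hjj' | rfl | hj'j
  · exact hlt _ hq _ hq' hjj'
  · exact disjoint_iff_inter_eq_empty.2
      (G.pairwise_disj j S hq.2.2.1 S' hq'.2.2.1 fun h => hne (by rw [h]))
  · exact (hlt _ hq' _ hq hj'j).symm

theorem stoppingCubes_finite {F : Set (Amb n)} {k₀ M : ℤ} {Q₀ : Set (Amb n)}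
    (hQ₀ : Q₀ ∈ G.Dk k₀) : (stoppingCubes G F k₀ M Q₀).Finite := by
  refine ((finite_Ioc k₀ M).biUnion fun j _ =>
    (finite_singleton j).prod (DyadicGrid.finite_subcubes hQ₀ j)).subset ?_
  rintro ⟨j, S⟩ ⟨hk₀j, hjM, hS, hSQ₀, -⟩
  exact mem_biUnion ⟨hk₀j, hjM⟩ ⟨rfl, hS, hSQ₀⟩

theorem tsum_measure_stoppingCubes_le {F : Set (Amb n)} {k₀ M : ℤ} {Q₀ : Set (Amb n)}
    (hQ₀ : Q₀ ∈ G.Dk k₀) :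
    ∑' q : stoppingCubes G F k₀ M Q₀, sigmaE n E q.1.2 ≤ sigmaE n E (Q₀ \ F) := by
  rw [← measure_biUnion (stoppingCubes_finite G hQ₀).countable
    (stoppingCubes_pairwiseDisjoint G F k₀ M Q₀) fun q hq => G.measurableSet q.1 q.2 hq.2.2.1]
  exact measure_mono (iUnion₂_subset fun q hq x hx =>
    ⟨hq.2.2.2.1 hx, disjoint_left.1 hq.2.2.2.2.1 hx⟩)

theorem inter_nonempty_of_notMem_stoppingCubes (hdiam : Metric.ediam E = ⊤) {F : Set (Amb n)}
    {k₀ M : ℤ} {Q₀ : Set (Amb n)} (hQ₀ : Q₀ ∈ G.Dk k₀) (hF : (Q₀ ∩ F).Nonempty) {x : Amb n}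
    (hxQ₀ : x ∈ Q₀) (hx : ∀ q ∈ stoppingCubes G F k₀ M Q₀, x ∉ q.2) {i : ℤ} (hk₀i : k₀ ≤ i)
    (hiM : i ≤ M) {T : Set (Amb n)} (hT : T ∈ G.Dk i) (hxT : x ∈ T) : (T ∩ F).Nonempty := by
  induction i, hk₀i using Int.leInduction generalizing T with
  | base => rwa [DyadicGrid.eq_of_mem hT hQ₀ hxT hxQ₀]
  | succ i hk₀i ih =>
    obtain ⟨P, hP, hxP⟩ := G.exists_mem_of_ediam_eq_top hdiam i (G.subset_E k₀ Q₀ hQ₀ hxQ₀)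
    by_contra hTF
    refine hx (i + 1, T) ⟨by omega, hiM, hT, DyadicGrid.subset_of_le (by omega) hQ₀ hT hxQ₀ hxT,
      not_not.1 (mt not_disjoint_iff_nonempty_inter.1 hTF), P, by simpa using hP,
      DyadicGrid.subset_of_le (by omega) hP hT hxP hxT, ih (by omega) hP hxP⟩ hxT

end Cones

section ConeMass

variable {X : Type*} [MeasurableSpace X] (ν : Measure X) (G : DyadicGrid n E)
  (R : ℤ → Set (Amb n) → Set X)

theorem aemeasurable_truncConeMass (hdiam : Metric.ediam E = ⊤) {k M : ℤ} (hkM : k ≤ M)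
    {Q : Set (Amb n)} (hQ : Q ∈ G.Dk k) :
    AEMeasurable (fun x => ν (dyadicCone G R (Iic M) Q x)) ((sigmaE n E).restrict Q) :=
  (aemeasurable_indicator_iff (G.measurableSet k Q hQ)).1 <|
    (G.measurable_indicator_of_forall_eq hdiam hkM hQ fun S hS x hx y hy => by
      rw [dyadicCone_Iic_congr G R hS hx hy]).aemeasurable

theorem truncConeMass_le_of_notMem_stoppingCubes (hdiam : Metric.ediam E = ⊤) {k₀ M : ℤ}
    (hk₀M : k₀ ≤ M) {Q₀ F : Set (Amb n)} (hQ₀ : Q₀ ∈ G.Dk k₀) {c : ℝ≥0∞}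
    (hF : ∀ y ∈ F, ν (dyadicCone G R univ Q₀ y) ≤ c) (hFne : (Q₀ ∩ F).Nonempty) {x : Amb n}
    (hxQ₀ : x ∈ Q₀) (hx : ∀ q ∈ stoppingCubes G F k₀ M Q₀, x ∉ q.2) :
    ν (dyadicCone G R (Iic M) Q₀ x) ≤ c := by
  obtain ⟨S, hS, hxS⟩ := G.exists_mem_of_ediam_eq_top hdiam M (G.subset_E k₀ Q₀ hQ₀ hxQ₀)
  obtain ⟨y, hyS, hyF⟩ :=
    inter_nonempty_of_notMem_stoppingCubes G hdiam hQ₀ hFne hxQ₀ hx hk₀M le_rfl hS hxS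
  calc ν (dyadicCone G R (Iic M) Q₀ x) = ν (dyadicCone G R (Iic M) Q₀ y) := by
        rw [dyadicCone_Iic_congr G R hS hxS hyS]
    _ ≤ ν (dyadicCone G R univ Q₀ y) := measure_mono (dyadicCone_mono G R (subset_univ _) Q₀ y)
    _ ≤ c := hF y hyF

theorem truncConeMass_le_add_of_mem_stoppingCubes {k₀ M : ℤ} {Q₀ F : Set (Amb n)} {c : ℝ≥0∞}
    (hF : ∀ y ∈ F, ν (dyadicCone G R univ Q₀ y) ≤ c) {q : ℤ × Set (Amb n)}
    (hq : q ∈ stoppingCubes G F k₀ M Q₀) {x : Amb n} (hx : x ∈ q.2) :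
    ν (dyadicCone G R (Iic M) Q₀ x) ≤ c + ν (dyadicCone G R (Iic M) q.2 x) := by
  obtain ⟨-, -, hS, -, -, P, hP, hSP, y, hyP, hyF⟩ := hq
  calc ν (dyadicCone G R (Iic M) Q₀ x)
      ≤ ν (dyadicCone G R (Iic (q.1 - 1)) Q₀ y ∪ dyadicCone G R (Iic M) q.2 x) := by
        rw [← dyadicCone_Iic_congr G R hP (hSP hx) hyP]
        exact measure_mono (dyadicCone_Iic_subset_union G R hS hx Q₀)
    _ ≤ ν (dyadicCone G R univ Q₀ y) + ν (dyadicCone G R (Iic M) q.2 x) :=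
        (measure_union_le _ _).trans
          (add_le_add_left (measure_mono (dyadicCone_mono G R (subset_univ _) Q₀ y)) _)
    _ ≤ c + ν (dyadicCone G R (Iic M) q.2 x) := add_le_add_left (hF y hyF) _

theorem setLIntegral_truncConeMass_le_of_mem_stoppingCubes {k₀ M : ℤ} {Q₀ F : Set (Amb n)}
    {c C : ℝ≥0∞} (hF : ∀ y ∈ F, ν (dyadicCone G R univ Q₀ y) ≤ c) {q : ℤ × Set (Amb n)}
    (hq : q ∈ stoppingCubes G F k₀ M Q₀)
    (hC : ∫⁻ x in q.2, ν (dyadicCone G R (Iic M) q.2 x) ∂sigmaE n E ≤ C * sigmaE n E q.2) :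
    ∫⁻ x in q.2, ν (dyadicCone G R (Iic M) Q₀ x) ∂sigmaE n E ≤ (c + C) * sigmaE n E q.2 :=
  calc ∫⁻ x in q.2, ν (dyadicCone G R (Iic M) Q₀ x) ∂sigmaE n E
      ≤ ∫⁻ x in q.2, c + ν (dyadicCone G R (Iic M) q.2 x) ∂sigmaE n E :=
        setLIntegral_mono' (G.measurableSet q.1 q.2 hq.2.2.1) fun x hx =>
          truncConeMass_le_add_of_mem_stoppingCubes ν G R hF hq hx
    _ ≤ c * sigmaE n E q.2 + C * sigmaE n E q.2 := by
        rw [lintegral_add_left measurable_const, setLIntegral_const]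
        gcongr
    _ = (c + C) * sigmaE n E q.2 := (add_mul _ _ _).symm

variable {ν G R} in
theorem lintegral_truncConeMass_le (hdiam : Metric.ediam E = ⊤) {c t C : ℝ≥0∞} (ht : t < 1)
    (hC : c + (c + C) * t ≤ C)
    (hbad : ∀ k, ∀ Q ∈ G.Dk k,
      sigmaE n E {x ∈ Q | c < ν (dyadicCone G R univ Q x)} ≤ t * sigmaE n E Q)
    (d : ℕ) {k₀ : ℤ} {Q₀ : Set (Amb n)} (hQ₀ : Q₀ ∈ G.Dk k₀) :
    ∫⁻ x in Q₀, ν (dyadicCone G R (Iic (k₀ + d)) Q₀ x) ∂sigmaE n E ≤ C * sigmaE n E Q₀ := by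
  induction d using Nat.strong_induction_on generalizing k₀ Q₀ with
  | _ d ih =>
  set M := k₀ + d with hMdef
  set F := {x ∈ Q₀ | ν (dyadicCone G R univ Q₀ x) ≤ c}
  set 𝒮 := stoppingCubes G F k₀ M Q₀
  have hF : ∀ y ∈ F, ν (dyadicCone G R univ Q₀ y) ≤ c := fun y hy => hy.2
  have hbadF : sigmaE n E (Q₀ \ F) ≤ t * sigmaE n E Q₀ := by
    convert hbad k₀ Q₀ hQ₀ using 2
    ext x
    simp [F, not_le]
  have hFne : (Q₀ ∩ F).Nonempty :=
    inter_nonempty_of_measure_diff_le (G.measure_pos hQ₀).ne' (G.measure_ne_top hQ₀) ht hbadF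
  have hstop : ∀ q : 𝒮, ∫⁻ x in q.1.2, ν (dyadicCone G R (Iic M) Q₀ x) ∂sigmaE n E ≤
      (c + C) * sigmaE n E q.1.2 := by
    rintro ⟨⟨j, S⟩, hq⟩
    have hM : M = j + (M - j).toNat := by have := hq.2.1; omega
    refine setLIntegral_truncConeMass_le_of_mem_stoppingCubes ν G R hF hq ?_
    rw [hM]
    exact ih (M - j).toNat (by have := hq.1; omega) hq.2.2.1
  have : Countable 𝒮 := (stoppingCubes_finite G hQ₀).countable.to_subtype
  calc ∫⁻ x in Q₀, ν (dyadicCone G R (Iic M) Q₀ x) ∂sigmaE n E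
      ≤ c * sigmaE n E Q₀ + ∑' q : 𝒮, ∫⁻ x in q.1.2, ν (dyadicCone G R (Iic M) Q₀ x) ∂sigmaE n E :=
        setLIntegral_le_of_le_of_notMem_iUnion (G.measurableSet k₀ Q₀ hQ₀)
          (fun q : 𝒮 => G.measurableSet q.1.1 q.1.2 q.2.2.2.1) fun x hx =>
          truncConeMass_le_of_notMem_stoppingCubes ν G R hdiam (by omega) hQ₀ hF hFne hx.1
            fun q hq hxq => hx.2 (mem_iUnion.2 ⟨⟨q, hq⟩, hxq⟩)
    _ ≤ c * sigmaE n E Q₀ + (c + C) * (t * sigmaE n E Q₀) := by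
        grw [ENNReal.tsum_le_tsum hstop, ENNReal.tsum_mul_left,
          tsum_measure_stoppingCubes_le G hQ₀, hbadF]
    _ = (c + (c + C) * t) * sigmaE n E Q₀ := by ring
    _ ≤ C * sigmaE n E Q₀ := by gcongr

variable {ν G R} in
theorem lintegral_coneMass_le (hdiam : Metric.ediam E = ⊤) {c t C : ℝ≥0∞} (ht : t < 1)
    (hC : c + (c + C) * t ≤ C)
    (hbad : ∀ k, ∀ Q ∈ G.Dk k,
      sigmaE n E {x ∈ Q | c < ν (dyadicCone G R univ Q x)} ≤ t * sigmaE n E Q)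
    {k : ℤ} {Q : Set (Amb n)} (hQ : Q ∈ G.Dk k) :
    ∫⁻ x in Q, ν (dyadicCone G R univ Q x) ∂sigmaE n E ≤ C * sigmaE n E Q := by
  have hmono : ∀ x, Monotone fun d : ℕ => dyadicCone G R (Iic (k + d)) Q x :=
    fun x d d' hdd' => dyadicCone_mono G R (Iic_subset_Iic.2 (by omega)) Q x
  calc ∫⁻ x in Q, ν (dyadicCone G R univ Q x) ∂sigmaE n E
      = ∫⁻ x in Q, ⨆ d : ℕ, ν (dyadicCone G R (Iic (k + d)) Q x) ∂sigmaE n E := by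
        simp_rw [← iUnion_dyadicCone_Iic G R k, (hmono _).measure_iUnion]
    _ = ⨆ d : ℕ, ∫⁻ x in Q, ν (dyadicCone G R (Iic (k + d)) Q x) ∂sigmaE n E :=
        lintegral_iSup' (fun d => aemeasurable_truncConeMass ν G R hdiam (by omega) hQ)
          (ae_of_all _ fun x _ _ hdd' => measure_mono (hmono x hdd'))
    _ ≤ C * sigmaE n E Q := iSup_le fun d => lintegral_truncConeMass_le hdiam ht hC hbad d hQ

end ConeMass

theorem ofReal_good_lambda_recursion_le {a b : ℝ} (ha : 0 ≤ a) (hb : b ∈ Ioo (0 : ℝ) 1) :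
    ENNReal.ofReal a + (ENNReal.ofReal a + ENNReal.ofReal ((2 - b) / b * a)) *
      ENNReal.ofReal (1 - b) ≤ ENNReal.ofReal ((2 - b) / b * a) := by
  obtain ⟨hb0, hb1⟩ := hb
  have hC : 0 ≤ (2 - b) / b * a := mul_nonneg (div_nonneg (by linarith) hb0.le) ha
  rw [← ENNReal.ofReal_add ha hC, ← ENNReal.ofReal_mul (by positivity),
    ← ENNReal.ofReal_add ha (mul_nonneg (by positivity) (by linarith))]
  refine ENNReal.ofReal_le_ofReal (le_of_eq ?_)
  field_simp
  ring

theorem good_lambda_implies_uniform_carleson_general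
    {n : ℕ} {E : Set (Amb n)}
    (G : DyadicGrid n E) (W : Whitney n E) {β : ℝ}
    {ψ : Amb n → Amb n → ℂ}
    (hEunb : ¬ Bornology.IsBounded E)
    {p N β' : ℝ} (hp : 1 < p) (hN : 0 < N) (hβ' : β' ∈ Set.Ioo (0 : ℝ) 1)
    (hdist : ∀ k, ∀ Q ∈ G.Dk k,
      sigmaE n E {x ∈ Q | ENNReal.ofReal N <
          coneSq G W β ψ (fun _ => 1) Q x ^ (p / 2)} ≤
        ENNReal.ofReal (1 - β') * sigmaE n E Q) :
    ∀ k, ∀ Q ∈ G.Dk k,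
      ∫⁻ x in Q, coneSq G W β ψ (fun _ => 1) Q x ∂(sigmaE n E) ≤
        ENNReal.ofReal ((2 - β') / β' * N ^ (2 / p)) * sigmaE n E Q := by
  intro k Q hQ
  set ν := volume.withDensity fun Y : Amb n =>
    (‖Theta n E ψ (fun _ => 1) Y‖₊ : ℝ≥0∞) ^ 2 / ENNReal.ofReal (del E Y ^ (n + 1))
  have hconeSq : ∀ Q x, coneSq G W β ψ (fun _ => 1) Q x = ν (dyadicCone G (UQ W β) univ Q x) :=
    fun Q x => by rw [withDensity_apply', ← cone_eq_dyadicCone]; rfl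
  have hlevel : ∀ a : ℝ≥0∞,
      ENNReal.ofReal N < a ^ (p / 2) ↔ ENNReal.ofReal (N ^ (2 / p)) < a := fun a => by
    rw [ofReal_lt_rpow_iff hN (by linarith), inv_div]
  simp_rw [hconeSq, hlevel] at hdist ⊢
  exact lintegral_coneMass_le (Metric.ediam_of_unbounded hEunb)
    (ENNReal.ofReal_lt_one.2 (by linarith [hβ'.1]))
    (ofReal_good_lambda_recursion_le (by positivity) hβ') hdist hQ

theorem good_lambda_implies_uniform_carleson
    {n : ℕ} (hn : 1 ≤ n) {E : Set (Amb n)} {CE : ℝ} (hE : IsADR n E CE)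
    (G : DyadicGrid n E) (W : Whitney n E) {β : ℝ} (hβ : 0 < β)
    (hβne : ∀ k, ∀ Q ∈ G.Dk k, (whitneyIdx W β k Q).Nonempty)
    {ψ : Amb n → Amb n → ℂ} {α Cψ : ℝ} (hψ : KernelCond n E ψ α Cψ)
    (hEunb : ¬ Bornology.IsBounded E)
    {p N β' : ℝ} (hp : 1 < p) (hp2 : p ≤ 2) (hN : 0 < N) (hβ' : β' ∈ Set.Ioo (0 : ℝ) 1)
    (hdist : ∀ k, ∀ Q ∈ G.Dk k,
      sigmaE n E {x ∈ Q | ENNReal.ofReal N <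
          coneSq G W β ψ (fun _ => 1) Q x ^ (p / 2)} ≤
        ENNReal.ofReal (1 - β') * sigmaE n E Q) :
    ∀ k, ∀ Q ∈ G.Dk k,
      ∫⁻ x in Q, coneSq G W β ψ (fun _ => 1) Q x ∂(sigmaE n E) ≤
        ENNReal.ofReal ((2 - β') / β' * N ^ (2 / p)) * sigmaE n E Q :=
  good_lambda_implies_uniform_carleson_general G W hEunb hp hN hβ' hdist

end LocalTb
end
end

section
/- Small-scale kernel estimate: There exist constants C₂ ≥ 1 and C > 0, depending only on n, α, C₃ and the ADR, kernel, grid and Whitney constants, such that for all integers j, k with 2^{-j} ≤ C₂^{-1} 2^{-k}, every Q′ ∈ 𝔻_k, every x ∈ Q′, every Y ∈ U_{Q′}, and every w ∈ E: |∫_E ψ(Y,z) φ_j(z,w) dσ(z)| ≤ C 2^{-(j−k)α} · 2^{-kα} / (2^{-k} + |x−w|)^{n+α}. -/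
open MeasureTheory Metric Set ENNReal NNReal

noncomputable section

/-!
Since `φ_j(·, w)` has mean zero and is supported in `B(w, C₃ 2^{-j})`, the integral does not
change when `ψ(Y, z)` is replaced by `ψ(Y, z) - ψ(Y, w)`. The Hölder condition bounds this
difference by `(C₃ 2^{-j})^α / |Y - w|^{n+α}`, and Ahlfors regularity bounds the measure of the
ball by `≲ 2^{-jn}`, which cancels the size `2^{jn}` of `φ_j`. The Whitney geometry of `U_{Q'}`
gives `δ(Y) ≥ 2^{-k}/4`, which makes the Hölder condition applicable once `2^{-j} ≪ 2^{-k}`,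
and `2^{-k} + |x - w| ≲ |Y - w|`.
-/

theorem norm_integral_mul_le_of_integral_eq_zero {X : Type*} [PseudoMetricSpace X]
    [MeasurableSpace X] [OpensMeasurableSpace X] {μ : Measure X} {f g : X → ℂ} {w : X}
    {r L M : ℝ} (hf : AEStronglyMeasurable f μ) (hg : AEStronglyMeasurable g μ)
    (hg_mean : ∫ z, g z ∂μ = 0) (hg_supp : ∀ z, r ≤ dist z w → g z = 0)
    (hg_bdd : ∀ z, ‖g z‖ ≤ M) (hf_osc : ∀ᵐ z ∂μ, dist z w < r → ‖f z - f w‖ ≤ L)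
    (hμ : μ (ball w r) < ∞) :
    ‖∫ z, f z * g z ∂μ‖ ≤ L * M * μ.real (ball w r) := by
  have hg_vanish : ∀ z ∉ ball w r, g z = 0 := fun z hz => hg_supp z (not_lt.mp hz)
  have hosc : ∀ᵐ z ∂μ.restrict (ball w r), ‖(f z - f w) * g z‖ ≤ L * M := by
    rw [ae_restrict_iff' measurableSet_ball]
    filter_upwards [hf_osc] with z hz hzw
    rw [norm_mul]
    exact mul_le_mul (hz hzw) (hg_bdd z) (norm_nonneg _) ((norm_nonneg _).trans (hz hzw))
  have hdiff_int : IntegrableOn (fun z => (f z - f w) * g z) (ball w r) μ :=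
    Measure.integrableOn_of_bounded hμ.ne ((hf.sub aestronglyMeasurable_const).mul hg) hosc
  have hg_int : IntegrableOn g (ball w r) μ :=
    Measure.integrableOn_of_bounded hμ.ne hg (ae_of_all _ hg_bdd)
  have hg_mean_ball : ∫ z in ball w r, g z ∂μ = 0 := by
    rwa [setIntegral_eq_integral_of_forall_compl_eq_zero hg_vanish]
  have hcancel : ∫ z, f z * g z ∂μ = ∫ z in ball w r, (f z - f w) * g z ∂μ := by
    rw [← setIntegral_eq_integral_of_forall_compl_eq_zero fun z hz => by
      rw [hg_vanish z hz, mul_zero]]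
    calc ∫ z in ball w r, f z * g z ∂μ
        = ∫ z in ball w r, ((f z - f w) * g z + f w * g z) ∂μ := by congr 1; ext z; ring
      _ = ∫ z in ball w r, (f z - f w) * g z ∂μ := by
        rw [integral_add hdiff_int (hg_int.const_mul _), integral_const_mul, hg_mean_ball,
          mul_zero, add_zero]
  rw [hcancel]
  exact norm_setIntegral_le_of_norm_le_const_ae hμ hosc

theorem div_rpow_le_mul_rpow_div_rpow {a b K B e : ℝ} (ha : 0 < a) (hb : 0 < b)
    (hab : a ≤ K * b) (hB : 0 ≤ B) (he : 0 ≤ e) : B / b ^ e ≤ B * K ^ e / a ^ e := by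
  have hK : 0 ≤ K := le_of_lt <| pos_of_mul_pos_left (ha.trans_le hab) hb.le
  rw [div_le_div_iff₀ (Real.rpow_pos_of_pos hb e) (Real.rpow_pos_of_pos ha e)]
  calc B * a ^ e ≤ B * (K * b) ^ e := by gcongr
    _ = B * K ^ e * b ^ e := by rw [Real.mul_rpow hK hb.le]; ring

theorem two_zpow_neg_rpow (j : ℤ) (a : ℝ) : ((2 : ℝ) ^ (-j)) ^ a = 2 ^ (-(j : ℝ) * a) := by
  rw [← Real.rpow_intCast, ← Real.rpow_mul zero_le_two]
  push_cast
  rfl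

theorem two_rpow_mul_two_zpow_neg_pow (j : ℤ) (n : ℕ) :
    (2 : ℝ) ^ ((j : ℝ) * n) * ((2 : ℝ) ^ (-j)) ^ n = 1 := by
  rw [← Real.rpow_natCast, two_zpow_neg_rpow, ← Real.rpow_add zero_lt_two]
  ring_nf
  exact Real.rpow_zero 2

namespace LocalTb

variable {n : ℕ} {E : Set (Amb n)}

theorem dist_le_of_mem_closedCube {c Y Z : Amb n} {m : ℤ} (hY : Y ∈ closedCube c m)
    (hZ : Z ∈ closedCube c m) : dist Y Z ≤ √(n + 1) * 2 ^ (-m) := by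
  have hcoord : ∀ i, dist (Y i) (Z i) ^ 2 ≤ ((2 : ℝ) ^ (-m)) ^ 2 := fun i => by
    have h := abs_sub_le (Y i) (c i) (Z i)
    rw [abs_sub_comm (c i)] at h
    have hYZ : dist (Y i) (Z i) ≤ 2 ^ (-m) := by
      rw [Real.dist_eq]; linarith [hY i, hZ i]
    exact pow_le_pow_left₀ dist_nonneg hYZ 2
  calc dist Y Z = √(∑ i, dist (Y i) (Z i) ^ 2) := EuclideanSpace.dist_eq Y Z
    _ ≤ √(∑ _i : Fin (n + 1), ((2 : ℝ) ^ (-m)) ^ 2) :=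
      Real.sqrt_le_sqrt (Finset.sum_le_sum fun i _ => hcoord i)
    _ = √(n + 1) * 2 ^ (-m) := by
      simp only [Finset.sum_const, Finset.card_univ, Fintype.card_fin, nsmul_eq_mul]
      push_cast
      rw [Real.sqrt_mul (by positivity), Real.sqrt_sq (by positivity)]

theorem ediam_closedCube_le (c : Amb n) (m : ℤ) :
    ediam (closedCube c m) ≤ ENNReal.ofReal (√(n + 1) * 2 ^ (-m)) :=
  ediam_le fun _ hY _ hZ => by
    rw [edist_dist]; exact ENNReal.ofReal_le_ofReal (dist_le_of_mem_closedCube hY hZ)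

theorem half_side_le_diam_closedCube (c : Amb n) (m : ℤ) :
    (2 : ℝ) ^ (-m) / 2 ≤ diam (closedCube c m) := by
  have hc : c ∈ closedCube c m := fun i => by rw [sub_self, abs_zero]; positivity
  have hc' : c + EuclideanSpace.single 0 ((2 : ℝ) ^ (-m) / 2) ∈ closedCube c m := fun i => by
    rw [PiLp.add_apply, add_sub_cancel_left, PiLp.single_apply]
    split_ifs
    · rw [abs_of_pos (by positivity)]
    · rw [abs_zero]; positivity
  have hbdd : Bornology.IsBounded (closedCube c m) :=
    isBounded_iff.mpr ⟨_, fun _ hY _ hZ => dist_le_of_mem_closedCube hY hZ⟩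
  calc (2 : ℝ) ^ (-m) / 2 = dist c (c + EuclideanSpace.single 0 ((2 : ℝ) ^ (-m) / 2)) := by
        rw [dist_self_add_right, PiLp.norm_single, Real.norm_of_nonneg (by positivity)]
    _ ≤ diam (closedCube c m) := dist_le_diam_of_mem hbdd hc hc'

theorem setDist_eq_toReal_iInf (A B : Set (Amb n)) :
    setDist A B = (⨅ a ∈ A, infEDist a B).toReal := rfl

theorem setDist_le_infDist {A B : Set (Amb n)} {Y : Amb n} (hY : Y ∈ A) (hB : B.Nonempty) :
    setDist A B ≤ infDist Y B :=
  ENNReal.toReal_mono (infEDist_ne_top hB) (iInf₂_le Y hY)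

theorem edist_le_ediam_add_setDist_add_ediam {A B : Set (Amb n)} {x y : Amb n} (hx : x ∈ A)
    (hy : y ∈ B) : edist x y ≤ ediam A + ENNReal.ofReal (setDist A B) + ediam B := by
  have hinf : infEDist x B ≤ ediam A + ⨅ a ∈ A, infEDist a B := by
    rw [iInf_subtype', ENNReal.add_iInf]
    refine le_iInf fun a => ?_
    calc infEDist x B ≤ infEDist a.1 B + edist x a.1 := infEDist_le_infEDist_add_edist
      _ ≤ ediam A + infEDist a.1 B := by
        rw [add_comm]; gcongr; exact edist_le_ediam_of_mem hx a.2
  have hfin : (⨅ a ∈ A, infEDist a B) ≠ ∞ :=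
    ne_top_of_le_ne_top (infEDist_ne_top ⟨y, hy⟩) (iInf₂_le x hx)
  calc edist x y ≤ infEDist x B + ediam B := edist_le_infEDist_add_ediam hy
    _ ≤ _ := by
      rw [setDist_eq_toReal_iInf, ENNReal.ofReal_toReal hfin]
      gcongr

theorem quarter_le_infDist_of_mem_UQ (W : Whitney n E) {β : ℝ} {k : ℤ} {Q : Set (Amb n)}
    {Y : Amb n} (hE : E.Nonempty) (hY : Y ∈ UQ W β k Q) : (2 : ℝ) ^ (-k) / 4 ≤ infDist Y E := by
  obtain ⟨p, ⟨hpW, -, hside, -⟩, hYp⟩ := mem_iUnion₂.mp hY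
  calc (2 : ℝ) ^ (-k) / 4 ≤ 4 * ((2 : ℝ) ^ (-p.2) / 2) := by linarith
    _ ≤ 4 * diam (closedCube p.1 p.2) := by gcongr; exact half_side_le_diam_closedCube _ _
    _ ≤ setDist (dilCube p.1 p.2 4) E := W.dist_lower p hpW
    _ ≤ setDist (closedCube p.1 p.2) E := W.dist_mid p hpW
    _ ≤ infDist Y E := setDist_le_infDist hYp hE

theorem dist_le_of_mem_UQ (G : DyadicGrid n E) (W : Whitney n E) {β : ℝ} {k : ℤ}
    {Q : Set (Amb n)} (hQ : Q ∈ G.Dk k) {x Y : Amb n} (hx : x ∈ Q) (hY : Y ∈ UQ W β k Q) :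
    dist x Y ≤ (G.C₁ + β + 8 * √(n + 1)) * 2 ^ (-k) := by
  obtain ⟨p, ⟨-, hside, -, hdist⟩, hYp⟩ := mem_iUnion₂.mp hY
  have hβ : 0 ≤ β * 2 ^ (-k) := ENNReal.toReal_nonneg.trans hdist
  have hcube : ediam (closedCube p.1 p.2) ≤ ENNReal.ofReal (8 * √(n + 1) * 2 ^ (-k)) :=
    (ediam_closedCube_le _ _).trans <| ENNReal.ofReal_le_ofReal <| by
      nlinarith [Real.sqrt_nonneg ((n : ℝ) + 1)]
  have hedist := (edist_le_ediam_add_setDist_add_ediam hx hYp).trans <|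
    add_le_add (add_le_add (G.diam_bound k Q hQ).2 (ENNReal.ofReal_le_ofReal hdist)) hcube
  rw [← ENNReal.ofReal_add (by have := G.C₁_pos; positivity) hβ,
    ← ENNReal.ofReal_add (by have := G.C₁_pos; positivity) (by positivity),
    edist_le_ofReal (by have := G.C₁_pos; positivity)] at hedist
  linarith

theorem add_dist_le_mul_dist_of_mem_UQ (G : DyadicGrid n E) (W : Whitney n E) {β : ℝ} {k : ℤ}
    {Q : Set (Amb n)} (hQ : Q ∈ G.Dk k) {x Y w : Amb n} (hx : x ∈ Q) (hY : Y ∈ UQ W β k Q)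
    (hw : w ∈ E) :
    2 ^ (-k) + dist x w ≤ (5 + 4 * (G.C₁ + β + 8 * √(n + 1))) * dist Y w := by
  have hYw : (2 : ℝ) ^ (-k) / 4 ≤ dist Y w :=
    (quarter_le_infDist_of_mem_UQ W ⟨w, hw⟩ hY).trans (infDist_le_dist_of_mem hw)
  have hxY := dist_le_of_mem_UQ G W hQ hx hY
  have hs : (0 : ℝ) < 2 ^ (-k) := by positivity
  have hA : 0 ≤ G.C₁ + β + 8 * √(n + 1) := by nlinarith [dist_nonneg (x := x) (y := Y)]
  nlinarith [dist_triangle x Y w]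

theorem IsADR.measure_ball_le {CE : ℝ} (hE : IsADR n E CE) (hEunb : ¬Bornology.IsBounded E)
    {w : Amb n} (hw : w ∈ E) {r : ℝ} (hr : 0 < r) :
    sigmaE n E (ball w r) ≤ ENNReal.ofReal (CE * r ^ n) :=
  (hE.2.2 w hw r hr (lt_of_lt_of_eq ofReal_lt_top (ediam_of_unbounded hEunb).symm)).2

theorem norm_integral_mul_le_of_holder {CE : ℝ} (hE : IsADR n E CE)
    (hEunb : ¬Bornology.IsBounded E) {ψ : Amb n → Amb n → ℂ} {α Cψ : ℝ} (hα : 0 ≤ α)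
    (hCψ : 0 ≤ Cψ) (hψ : Measurable (Function.uncurry ψ))
    (hψ_hol : ∀ X, X ∉ E → ∀ y ∈ E, ∀ y' ∈ E, 2 * dist y y' ≤ dist X y →
      ‖ψ X y - ψ X y'‖ ≤ Cψ * dist y y' ^ α / dist X y ^ ((n : ℝ) + α))
    {g : Amb n → ℂ} {w Y : Amb n} {r M : ℝ} (hg : Measurable g) (hr : 0 < r)
    (hg_supp : ∀ z, r ≤ dist z w → g z = 0) (hg_bdd : ∀ z, ‖g z‖ ≤ M)
    (hg_mean : ∫ z, g z ∂(sigmaE n E) = 0) (hYE : Y ∉ E) (hw : w ∈ E)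
    (hrY : 2 * r ≤ dist Y w) :
    ‖∫ z, ψ Y z * g z ∂(sigmaE n E)‖ ≤
      Cψ * r ^ α / dist Y w ^ ((n : ℝ) + α) * M * (CE * r ^ n) := by
  have hball := hE.measure_ball_le hEunb hw hr
  have hosc : ∀ᵐ z ∂(sigmaE n E), dist z w < r →
      ‖ψ Y z - ψ Y w‖ ≤ Cψ * r ^ α / dist Y w ^ ((n : ℝ) + α) := by
    filter_upwards [ae_restrict_mem hE.1.measurableSet] with z hz hzw
    rw [norm_sub_rev]; rw [dist_comm] at hzw
    calc ‖ψ Y w - ψ Y z‖ ≤ Cψ * dist w z ^ α / dist Y w ^ ((n : ℝ) + α) :=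
          hψ_hol Y hYE w hw z hz (by linarith)
      _ ≤ Cψ * r ^ α / dist Y w ^ ((n : ℝ) + α) := by gcongr
  have hL : 0 ≤ Cψ * r ^ α / dist Y w ^ ((n : ℝ) + α) := by positivity
  calc _ ≤ Cψ * r ^ α / dist Y w ^ ((n : ℝ) + α) * M * (sigmaE n E).real (ball w r) :=
        norm_integral_mul_le_of_integral_eq_zero
          (hψ.comp measurable_prodMk_left).aestronglyMeasurable hg.aestronglyMeasurable hg_mean
          hg_supp hg_bdd hosc (hball.trans_lt ofReal_lt_top)
    _ ≤ _ := mul_le_mul_of_nonneg_left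
        (ENNReal.toReal_le_of_le_ofReal (by have := hE.2.1; positivity) hball)
        (mul_nonneg hL ((norm_nonneg _).trans (hg_bdd w)))

theorem small_scale_kernel_estimate_general
    {n : ℕ} {E : Set (Amb n)} {CE : ℝ} (hE : IsADR n E CE)
    (G : DyadicGrid n E) (W : Whitney n E) {β : ℝ} (hβ : 0 < β)
    {ψ : Amb n → Amb n → ℂ} {α Cψ : ℝ} (hψ : KernelCond n E ψ α Cψ)
    (hEunb : ¬ Bornology.IsBounded E)
    {φ : ℤ → Amb n → Amb n → ℂ} {C₃ : ℝ} (hC₃ : 0 < C₃)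
    (hφmeas : ∀ j, Measurable (Function.uncurry (φ j)))
    (hφsupp : ∀ j : ℤ, ∀ x y : Amb n, C₃ * (2 : ℝ) ^ (-j) ≤ dist x y → φ j x y = 0)
    (hφbdd : ∀ j : ℤ, ∀ x y : Amb n, ‖φ j x y‖ ≤ C₃ * (2 : ℝ) ^ ((j : ℝ) * n))
    (hφmean : ∀ j : ℤ, ∀ y ∈ E, ∫ x, φ j x y ∂(sigmaE n E) = 0) :
    ∃ C₂ C : ℝ, 1 ≤ C₂ ∧ 0 < C ∧ ∀ j k : ℤ, (2 : ℝ) ^ (-j) ≤ C₂⁻¹ * (2 : ℝ) ^ (-k) →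
      ∀ Q' ∈ G.Dk k, ∀ x ∈ Q', ∀ Y ∈ UQ W β k Q', ∀ w ∈ E,
        ‖∫ z, ψ Y z * φ j z w ∂(sigmaE n E)‖ ≤
          C * (2 : ℝ) ^ (-(((j : ℝ) - (k : ℝ)) * α)) * (2 : ℝ) ^ (-(k : ℝ) * α) /
            ((2 : ℝ) ^ (-k) + dist x w) ^ ((n : ℝ) + α) := by
  obtain ⟨hα, hCψ, hψ_meas, -, hψ_hol⟩ := hψ
  set A := G.C₁ + β + 8 * √(n + 1)
  have hA : 0 < A := by have := G.C₁_pos; positivity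
  have hCE : 0 < CE := one_pos.trans_le hE.2.1
  refine ⟨max 1 (8 * C₃), CE * Cψ * C₃ ^ (n + 1) * C₃ ^ α * (5 + 4 * A) ^ ((n : ℝ) + α),
    le_max_left _ _, by positivity, fun j k hjk Q hQ x hx Y hY w hw => ?_⟩
  have hscale : 2 * (C₃ * 2 ^ (-j)) ≤ dist Y w := by
    have hδ := (quarter_le_infDist_of_mem_UQ W ⟨w, hw⟩ hY).trans (infDist_le_dist_of_mem hw)
    have := (le_inv_mul_iff₀ (by positivity)).mp hjk
    nlinarith [le_max_right 1 (8 * C₃), zpow_pos (two_pos (α := ℝ)) (-j)]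
  have hYE : Y ∉ E := fun hYE => by
    have hδ := quarter_le_infDist_of_mem_UQ W ⟨w, hw⟩ hY
    rw [infDist_zero_of_mem hYE] at hδ
    linarith [zpow_pos (two_pos (α := ℝ)) (-k)]
  calc _ ≤ Cψ * (C₃ * 2 ^ (-j)) ^ α / dist Y w ^ ((n : ℝ) + α) * (C₃ * 2 ^ ((j : ℝ) * n)) *
        (CE * (C₃ * 2 ^ (-j)) ^ n) :=
        norm_integral_mul_le_of_holder hE hEunb hα.le hCψ.le hψ_meas hψ_hol
          ((hφmeas j).comp measurable_prodMk_right) (by positivity) (fun z => hφsupp j z w)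
          (fun z => hφbdd j z w) (hφmean j w hw) hYE hw hscale
    _ = CE * Cψ * C₃ ^ (n + 1) * C₃ ^ α * 2 ^ (-(j : ℝ) * α) / dist Y w ^ ((n : ℝ) + α) := by
      rw [Real.mul_rpow hC₃.le (by positivity), two_zpow_neg_rpow, mul_pow]
      linear_combination (CE * Cψ * C₃ ^ (n + 1) * C₃ ^ α * 2 ^ (-(j : ℝ) * α) /
        dist Y w ^ ((n : ℝ) + α)) * two_rpow_mul_two_zpow_neg_pow j n
    _ ≤ CE * Cψ * C₃ ^ (n + 1) * C₃ ^ α * 2 ^ (-(j : ℝ) * α) * (5 + 4 * A) ^ ((n : ℝ) + α) /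
        (2 ^ (-k) + dist x w) ^ ((n : ℝ) + α) :=
      div_rpow_le_mul_rpow_div_rpow (by positivity) (lt_of_lt_of_le (by positivity) hscale)
        (add_dist_le_mul_dist_of_mem_UQ G W hQ hx hY hw) (by positivity) (by positivity)
    _ = _ := by
      rw [mul_assoc _ ((2 : ℝ) ^ (-(((j : ℝ) - k) * α))), ← Real.rpow_add zero_lt_two]
      ring_nf

theorem small_scale_kernel_estimate
    {n : ℕ} (hn : 1 ≤ n) {E : Set (Amb n)} {CE : ℝ} (hE : IsADR n E CE)
    (G : DyadicGrid n E) (W : Whitney n E) {β : ℝ} (hβ : 0 < β)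
    (hβne : ∀ k, ∀ Q ∈ G.Dk k, (whitneyIdx W β k Q).Nonempty)
    {ψ : Amb n → Amb n → ℂ} {α Cψ : ℝ} (hψ : KernelCond n E ψ α Cψ)
    (hEunb : ¬ Bornology.IsBounded E)
    {φ : ℤ → Amb n → Amb n → ℂ} {C₃ : ℝ} (hC₃ : 0 < C₃)
    (hφmeas : ∀ j, Measurable (Function.uncurry (φ j)))
    (hφsupp : ∀ j : ℤ, ∀ x y : Amb n, C₃ * (2 : ℝ) ^ (-j) ≤ dist x y → φ j x y = 0)
    (hφbdd : ∀ j : ℤ, ∀ x y : Amb n, ‖φ j x y‖ ≤ C₃ * (2 : ℝ) ^ ((j : ℝ) * n))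
    (hφmean : ∀ j : ℤ, ∀ y ∈ E, ∫ x, φ j x y ∂(sigmaE n E) = 0) :
    ∃ C₂ C : ℝ, 1 ≤ C₂ ∧ 0 < C ∧ ∀ j k : ℤ, (2 : ℝ) ^ (-j) ≤ C₂⁻¹ * (2 : ℝ) ^ (-k) →
      ∀ Q' ∈ G.Dk k, ∀ x ∈ Q', ∀ Y ∈ UQ W β k Q', ∀ w ∈ E,
        ‖∫ z, ψ Y z * φ j z w ∂(sigmaE n E)‖ ≤
          C * (2 : ℝ) ^ (-(((j : ℝ) - (k : ℝ)) * α)) * (2 : ℝ) ^ (-(k : ℝ) * α) /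
            ((2 : ℝ) ^ (-k) + dist x w) ^ ((n : ℝ) + α) :=
  small_scale_kernel_estimate_general hE G W hβ hψ hEunb hC₃ hφmeas hφsupp hφbdd hφmean

end LocalTb
end
end

section
/- From sawtooth bounds to a distributional inequality: Assume E is unbounded and fix p ∈ (1,2]. Suppose there exist η ∈ (0,1) and C₁ > 0 such that for every Q ∈ 𝔻 there is a family ℱ = {Q_k} of dyadic subcubes of Q with Σ_k σ(Q_k) ≤ (1−η) σ(Q) and ∫_Q (∬_{γ_Q(x)} |Θ1(Y)|² dY / δ(Y)^{n+1})^{p/2} dσ(x) ≤ C₁ σ(Q), where γ_Q is formed with this family ℱ. Then there exists N > 0, depending only on η and C₁, such that for every Q ∈ 𝔻: σ({x ∈ Q : (∬_{Γ_Q(x)} |Θ1(Y)|² dY / δ(Y)^{n+1})^{p/2} > N}) ≤ (1 − η/2) σ(Q). -/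
/-!
Off the union `B` of the stopping cubes `ℱ`, every dyadic cube `Q' ∋ x` contributing to
`Γ_Q(x)` is good: if it met some `Q_k` with `ℓ(Q_k) ≥ ℓ(Q')`, it would lie inside `Q_k`, and
so would `x`. Hence `Γ_Q(x) = γ_Q(x)` for `x ∈ Q \ B`, and Chebyshev's inequality at height
`N = 2C₁/η` bounds the superlevel set by `σ(B) + (η/2) σ(Q) ≤ (1 - η/2) σ(Q)`. Chebyshev needs
the sawtooth square function to be measurable, which follows from Tonelli since `σ` is
`σ`-finite on an unbounded ADR set.
-/

open MeasureTheory Metric Set ENNReal NNReal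

noncomputable section

namespace LocalTb

variable {n : ℕ} {E : Set (Amb n)}

theorem IsADR.isLocallyFiniteMeasure {CE : ℝ} (hE : IsADR n E CE)
    (hEunb : ¬ Bornology.IsBounded E) : IsLocallyFiniteMeasure (sigmaE n E) := by
  refine ⟨fun x => ⟨ball x 1, ball_mem_nhds x one_pos, ?_⟩⟩
  rcases (E ∩ ball x 1).eq_empty_or_nonempty with h | ⟨y, hyE, hyx⟩
  · rw [sigmaE, Measure.restrict_apply measurableSet_ball, inter_comm, h, measure_empty]
    exact ENNReal.zero_lt_top
  · have hxy : ball x 1 ⊆ ball y 2 :=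
      ball_subset_ball' (by linarith [mem_ball'.mp hyx])
    calc sigmaE n E (ball x 1) ≤ sigmaE n E (ball y 2) := measure_mono hxy
      _ ≤ ENNReal.ofReal (CE * 2 ^ n) :=
        (hE.2.2 y hyE 2 two_pos
          (ediam_of_unbounded hEunb ▸ ofReal_lt_top : ENNReal.ofReal 2 < ediam E)).2
      _ < ⊤ := ofReal_lt_top

namespace DyadicGrid

variable (G : DyadicGrid n E)

theorem countable_Dk [SFinite (sigmaE n E)] (k : ℤ) : (G.Dk k).Countable := by
  have hpos : ∀ Q : G.Dk k, 0 < sigmaE n E Q := fun Q =>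
    (ENNReal.ofReal_pos.mpr (by have := G.C₁_pos; positivity)).trans_le
      (G.meas_bound k Q Q.2).1
  have h := Measure.countable_meas_pos_of_disjoint_iUnion (μ := sigmaE n E)
    (As := fun Q : G.Dk k => (Q : Set (Amb n))) (fun Q => G.measurableSet k Q Q.2)
    fun Q Q' hne => disjoint_iff_inter_eq_empty.mpr
      (G.pairwise_disj k Q Q.2 Q' Q'.2 (Subtype.coe_injective.ne hne))
  simp only [hpos, ofPred_true, countable_univ_iff] at h
  exact countable_coe_iff.mp h

theorem countable_of_forall_mem_Dk [SFinite (sigmaE n E)] {F : Set (Set (Amb n) × ℤ)}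
    (hF : ∀ q ∈ F, q.1 ∈ G.Dk q.2) : F.Countable :=
  (countable_iUnion fun m => (G.countable_Dk m).image fun Q => (Q, m)).mono fun q hq =>
    mem_iUnion_of_mem q.2 (mem_image_of_mem (fun Q => (Q, q.2)) (hF q hq))

theorem subset_of_le_of_inter_nonempty {k k' : ℤ} {Q Q' : Set (Amb n)} (hQ : Q ∈ G.Dk k)
    (hQ' : Q' ∈ G.Dk k') (hkk' : k ≤ k') (hQQ' : (Q' ∩ Q).Nonempty) : Q' ⊆ Q := by
  rcases hkk'.lt_or_eq with hlt | rfl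
  · exact (G.nested hlt Q hQ Q' hQ').resolve_right hQQ'.ne_empty
  · by_cases hne : Q' = Q
    · exact hne.le
    · exact absurd (G.pairwise_disj k Q' hQ' Q hQ hne) hQQ'.ne_empty

end DyadicGrid

theorem ball_subset_closedCube (c : Amb n) (m : ℤ) :
    ball c ((2 : ℝ) ^ (-m) / 2) ⊆ closedCube c m := fun Y hY i =>
  (Real.dist_eq _ _ ▸ PiLp.dist_apply_le Y c i).trans (mem_ball.mp hY).le

theorem isClosed_closedCube (c : Amb n) (m : ℤ) : IsClosed (closedCube c m) := by
  simp only [closedCube, ofPred_forall]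
  exact isClosed_iInter fun i => isClosed_le (by fun_prop) continuous_const

namespace Whitney

variable (W : Whitney n E)

theorem countable_cubes : W.cubes.Countable := by
  have hdisj : W.cubes.PairwiseDisjoint fun p => interior (closedCube p.1 p.2) :=
    fun p hp q hq hne => disjoint_iff_inter_eq_empty.mpr (W.disj_int p hp q hq hne)
  refine hdisj.countable_of_isOpen (fun _ _ => isOpen_interior) fun p _ => ⟨p.1, ?_⟩
  have hball : ball p.1 ((2 : ℝ) ^ (-p.2) / 2) ⊆ interior (closedCube p.1 p.2) :=
    interior_maximal (ball_subset_closedCube p.1 p.2) isOpen_ball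
  exact hball (mem_ball_self (by positivity))

theorem measurableSet_UQ (β : ℝ) (k : ℤ) (Q : Set (Amb n)) : MeasurableSet (UQ W β k Q) :=
  .biUnion (W.countable_cubes.mono fun _ hp => hp.1) fun p _ =>
    (isClosed_closedCube p.1 p.2).measurableSet

end Whitney

theorem measurable_setLIntegral_preimage_prodMk {α β : Type*} [MeasurableSpace α]
    [MeasurableSpace β] {ν : Measure β} [SFinite ν] {A : Set (α × β)} (hA : MeasurableSet A)
    {h : β → ℝ≥0∞} (hh : Measurable h) :
    Measurable fun x => ∫⁻ y in Prod.mk x ⁻¹' A, h y ∂ν := by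
  simp_rw [← lintegral_indicator (hA.preimage measurable_prodMk_left)]
  exact ((hh.comp measurable_snd).indicator hA).lintegral_prod_right'

theorem measurable_Theta [SFinite (sigmaE n E)] {ψ : Amb n → Amb n → ℂ}
    (hψ : Measurable (Function.uncurry ψ)) {f : Amb n → ℂ} (hf : Measurable f) :
    Measurable (Theta n E ψ f) :=
  ((hψ.mul (hf.comp measurable_snd)).stronglyMeasurable.integral_prod_right'
    (ν := sigmaE n E)).measurable

def goodConeGraph (G : DyadicGrid n E) (W : Whitney n E) (β : ℝ)
    (F : Set (Set (Amb n) × ℤ)) (Q : Set (Amb n)) : Set (Amb n × Amb n) :=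
  ⋃ (k' : ℤ), ⋃ Q' ∈ {Q' ∈ G.Dk k' | Q' ⊆ Q ∧
      ∀ q ∈ F, (Q' ∩ q.1).Nonempty → (2 : ℝ) ^ (-q.2) < (2 : ℝ) ^ (-k')},
    Q' ×ˢ UQ W β k' Q'

section Sawtooth

variable (G : DyadicGrid n E) (W : Whitney n E) (β : ℝ) (F : Set (Set (Amb n) × ℤ))
  (Q : Set (Amb n))

theorem goodCone_eq_preimage (x : Amb n) :
    goodCone G W β F Q x = Prod.mk x ⁻¹' goodConeGraph G W β F Q := by
  ext Y
  simp only [goodCone, goodConeGraph, mem_preimage, mem_iUnion, mem_ofPred_eq, mem_prod,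
    exists_prop]
  grind

theorem measurableSet_goodConeGraph [SFinite (sigmaE n E)] :
    MeasurableSet (goodConeGraph G W β F Q) :=
  .iUnion fun k' => .biUnion ((G.countable_Dk k').mono fun _ hQ' => hQ'.1) fun Q' hQ' =>
    (G.measurableSet k' Q' hQ'.1).prod (W.measurableSet_UQ β k' Q')

theorem measurable_goodConeSq [SFinite (sigmaE n E)] {ψ : Amb n → Amb n → ℂ}
    (hψ : Measurable (Function.uncurry ψ)) {f : Amb n → ℂ} (hf : Measurable f) :
    Measurable (goodConeSq G W β ψ F f Q) := by
  have hdel : Measurable (del E) := (continuous_infDist_pt E).measurable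
  unfold goodConeSq
  simp_rw [goodCone_eq_preimage]
  exact measurable_setLIntegral_preimage_prodMk (measurableSet_goodConeGraph G W β F Q)
    ((measurable_Theta hψ hf).nnnorm.coe_nnreal_ennreal.pow_const 2 |>.div
      (ENNReal.measurable_ofReal.comp (hdel.pow_const (n + 1))))

variable {G F}

theorem cone_subset_goodCone (hF : ∀ q ∈ F, q.1 ∈ G.Dk q.2) {x : Amb n}
    (hx : x ∉ ⋃ q ∈ F, q.1) : cone G W β Q x ⊆ goodCone G W β F Q x := by
  intro Y hY
  simp only [cone, goodCone, mem_iUnion, mem_ofPred_eq, exists_prop] at hY ⊢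
  obtain ⟨k', Q', ⟨hQ', hxQ', hQ'Q⟩, hY⟩ := hY
  refine ⟨k', Q', ⟨hQ', hxQ', hQ'Q, fun q hq hmeet => ?_⟩, hY⟩
  by_contra hle
  have hk : q.2 ≤ k' := by
    rwa [not_lt, zpow_le_zpow_iff_right₀ (one_lt_two (α := ℝ)), neg_le_neg_iff] at hle
  exact hx (mem_biUnion hq (G.subset_of_le_of_inter_nonempty (hF q hq) hQ' hk hmeet hxQ'))

theorem coneSq_le_goodConeSq (hF : ∀ q ∈ F, q.1 ∈ G.Dk q.2) (ψ : Amb n → Amb n → ℂ)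
    (f : Amb n → ℂ) {x : Amb n} (hx : x ∉ ⋃ q ∈ F, q.1) :
    coneSq G W β ψ f Q x ≤ goodConeSq G W β ψ F f Q x :=
  lintegral_mono_set (cone_subset_goodCone W β Q hF hx)

end Sawtooth

theorem measure_superlevel_le_add_lintegral_div {α : Type*} [MeasurableSpace α]
    {μ : Measure α} {Q B : Set α} {f g : α → ℝ≥0∞} (hfg : ∀ x ∈ Q, x ∉ B → f x ≤ g x)
    (hg : AEMeasurable g (μ.restrict Q)) {c : ℝ≥0∞} (hc0 : c ≠ 0) (hc : c ≠ ⊤) :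
    μ {x ∈ Q | c < f x} ≤ μ B + (∫⁻ x in Q, g x ∂μ) / c := by
  have hsub : {x ∈ Q | c < f x} ⊆ B ∪ {x | c ≤ g x} ∩ Q := fun x ⟨hxQ, hx⟩ =>
    or_iff_not_imp_left.mpr fun hxB => ⟨(hx.trans_le (hfg x hxQ hxB)).le, hxQ⟩
  calc μ {x ∈ Q | c < f x} ≤ μ B + μ ({x | c ≤ g x} ∩ Q) :=
        (measure_mono hsub).trans (measure_union_le _ _)
    _ ≤ μ B + μ.restrict Q {x | c ≤ g x} := add_le_add_right (Measure.le_restrict_apply _ _) _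
    _ ≤ μ B + (∫⁻ x in Q, g x ∂μ) / c :=
        add_le_add_right (meas_ge_le_lintegral_div hg hc0 hc) _

theorem sawtooth_to_distributional_general
    {n : ℕ} {E : Set (Amb n)} {CE : ℝ} (hE : IsADR n E CE)
    (G : DyadicGrid n E) (W : Whitney n E) {β : ℝ}
    {ψ : Amb n → Amb n → ℂ} {α Cψ : ℝ} (hψ : KernelCond n E ψ α Cψ)
    (hEunb : ¬ Bornology.IsBounded E)
    {η C₁' p : ℝ} (hη : η ∈ Set.Ioo (0 : ℝ) 1) (hC₁' : 0 < C₁')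
    (hp : 1 < p)
    (hF : ∀ k, ∀ Q ∈ G.Dk k, ∃ F : Set (Set (Amb n) × ℤ),
      (∀ q ∈ F, q.1 ∈ G.Dk q.2 ∧ q.1 ⊆ Q) ∧
      (∑' q : F, sigmaE n E q.val.1) ≤ ENNReal.ofReal (1 - η) * sigmaE n E Q ∧
      ∫⁻ x in Q, goodConeSq G W β ψ F (fun _ => 1) Q x ^ (p / 2) ∂(sigmaE n E) ≤
        ENNReal.ofReal C₁' * sigmaE n E Q) :
    ∃ N : ℝ, 0 < N ∧ ∀ k, ∀ Q ∈ G.Dk k,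
      sigmaE n E {x ∈ Q | ENNReal.ofReal N <
          coneSq G W β ψ (fun _ => 1) Q x ^ (p / 2)} ≤
        ENNReal.ofReal (1 - η / 2) * sigmaE n E Q := by
  have := hE.isLocallyFiniteMeasure hEunb
  have hη0 := hη.1
  have hN : 0 < 2 * C₁' / η := by positivity
  refine ⟨2 * C₁' / η, hN, fun k Q hQ => ?_⟩
  obtain ⟨F, hFQ, hFsum, hFint⟩ := hF k Q hQ
  have hFD : ∀ q ∈ F, q.1 ∈ G.Dk q.2 := fun q hq => (hFQ q hq).1
  have hbad : sigmaE n E (⋃ q ∈ F, q.1) ≤ ENNReal.ofReal (1 - η) * sigmaE n E Q :=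
    (measure_biUnion_le _ (G.countable_of_forall_mem_Dk hFD) _).trans hFsum
  have hgood : AEMeasurable (fun x => goodConeSq G W β ψ F (fun _ => 1) Q x ^ (p / 2))
      ((sigmaE n E).restrict Q) :=
    ((measurable_goodConeSq G W β F Q hψ.2.2.1 measurable_const).pow_const _).aemeasurable
  calc _ ≤ sigmaE n E (⋃ q ∈ F, q.1) + (∫⁻ x in Q, goodConeSq G W β ψ F (fun _ => 1) Q x ^
          (p / 2) ∂(sigmaE n E)) / ENNReal.ofReal (2 * C₁' / η) :=
        measure_superlevel_le_add_lintegral_div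
          (fun x _ hx => ENNReal.rpow_le_rpow (coneSq_le_goodConeSq W β Q hFD ψ _ hx)
            (by linarith))
          hgood (ENNReal.ofReal_pos.mpr hN).ne' ofReal_ne_top
    _ ≤ ENNReal.ofReal (1 - η) * sigmaE n E Q +
        ENNReal.ofReal C₁' * sigmaE n E Q / ENNReal.ofReal (2 * C₁' / η) := by gcongr
    _ = ENNReal.ofReal (1 - η / 2) * sigmaE n E Q := by
        rw [div_eq_mul_inv, mul_right_comm, ← div_eq_mul_inv, ← ENNReal.ofReal_div_of_pos hN,
          ← add_mul, ← ENNReal.ofReal_add (by linarith [hη.2]) (by positivity)]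
        congr 2
        field_simp
        ring

theorem sawtooth_to_distributional
    {n : ℕ} (hn : 1 ≤ n) {E : Set (Amb n)} {CE : ℝ} (hE : IsADR n E CE)
    (G : DyadicGrid n E) (W : Whitney n E) {β : ℝ} (hβ : 0 < β)
    (hβne : ∀ k, ∀ Q ∈ G.Dk k, (whitneyIdx W β k Q).Nonempty)
    {ψ : Amb n → Amb n → ℂ} {α Cψ : ℝ} (hψ : KernelCond n E ψ α Cψ)
    (hEunb : ¬ Bornology.IsBounded E)
    {η C₁' p : ℝ} (hη : η ∈ Set.Ioo (0 : ℝ) 1) (hC₁' : 0 < C₁')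
    (hp : 1 < p) (hp2 : p ≤ 2)
    (hF : ∀ k, ∀ Q ∈ G.Dk k, ∃ F : Set (Set (Amb n) × ℤ),
      (∀ q ∈ F, q.1 ∈ G.Dk q.2 ∧ q.1 ⊆ Q) ∧
      (∑' q : F, sigmaE n E q.val.1) ≤ ENNReal.ofReal (1 - η) * sigmaE n E Q ∧
      ∫⁻ x in Q, goodConeSq G W β ψ F (fun _ => 1) Q x ^ (p / 2) ∂(sigmaE n E) ≤
        ENNReal.ofReal C₁' * sigmaE n E Q) :
    ∃ N : ℝ, 0 < N ∧ ∀ k, ∀ Q ∈ G.Dk k,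
      sigmaE n E {x ∈ Q | ENNReal.ofReal N <
          coneSq G W β ψ (fun _ => 1) Q x ^ (p / 2)} ≤
        ENNReal.ofReal (1 - η / 2) * sigmaE n E Q :=
  sawtooth_to_distributional_general hE G W hψ hEunb hη hC₁' hp hF

end LocalTb
end
end

section
/- Far-away square function estimate for bounded ADR sets: Suppose E is bounded and set r₀ := diam(E). Let B be any ball of radius r₀ containing E and let 8B denote the concentric ball of radius 8r₀. Then there is a constant C, depending only on n, α, C_ψ and the ADR constant C_E, such that for every f ∈ L²(σ): ∬_{ℝ^{n+1} \ 8B} |Θf(Y)|² dY / δ(Y) ≤ C ∫_E |f(x)|² dσ(x). -/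
open MeasureTheory Metric Set ENNReal NNReal

noncomputable section

/-! For `Y` outside `8B`, every `y ∈ E` satisfies `|Y - y| ≥ |Y - x₀|/2`, and so does `δ(Y)`.
The size condition then gives `|ψ(Y,y)| ≲ |Y - x₀|^{-n}`, and Cauchy–Schwarz on `σ`, a finite
measure because `E` is compact and ADR, yields
`|Θf(Y)|² / δ(Y) ≲ σ(E) ‖f‖₂² |Y - x₀|^{-(2n+1)}`.
Since `2n + 1 > n + 1` for `n ≥ 1`, this decays integrably in `ℝ^{n+1}`. When `E` has at most
one point, `σ = 0` because `n`-dimensional Hausdorff measure has no atoms. -/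

theorem sq_lintegral_le_measure_univ_mul_lintegral_sq {α : Type*} [MeasurableSpace α]
    (μ : Measure α) {g : α → ℝ≥0∞} (hg : AEMeasurable g μ) :
    (∫⁻ x, g x ∂μ) ^ 2 ≤ μ univ * ∫⁻ x, g x ^ 2 ∂μ := by
  have hsq : ∀ a : ℝ≥0∞, (a ^ (1 / 2 : ℝ)) ^ 2 = a := fun a => by
    rw [← ENNReal.rpow_natCast, ← ENNReal.rpow_mul]; norm_num
  have hHolder := ENNReal.lintegral_mul_le_Lp_mul_Lq μ Real.HolderConjugate.two_two hg
    aemeasurable_const (g := fun _ => 1)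
  simp only [Pi.mul_apply, mul_one, lintegral_const, one_pow, one_mul,
    ENNReal.rpow_two] at hHolder
  calc (∫⁻ x, g x ∂μ) ^ 2
      ≤ ((∫⁻ x, g x ^ 2 ∂μ) ^ (1 / 2 : ℝ) * μ univ ^ (1 / 2 : ℝ)) ^ 2 := by gcongr
    _ = μ univ * ∫⁻ x, g x ^ 2 ∂μ := by rw [mul_pow, hsq, hsq, mul_comm]

theorem inv_pow_le_mul_one_add_rpow_neg {R D : ℝ} (hR : 0 < R) (hRD : R ≤ D) (k : ℕ) :
    D⁻¹ ^ k ≤ (1 + R⁻¹) ^ k * (1 + D) ^ (-(k : ℝ)) := by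
  have hD : 0 < D := hR.trans_le hRD
  rw [Real.rpow_neg (by positivity), Real.rpow_natCast, ← inv_pow, ← mul_pow]
  gcongr
  rw [← div_eq_mul_inv, le_div_iff₀ (by positivity), mul_add, mul_one, inv_mul_cancel₀ hD.ne',
    add_comm]
  linarith [inv_anti₀ hR hRD]

theorem setLIntegral_compl_closedBall_inv_dist_pow_le {F : Type*} [NormedAddCommGroup F]
    [MeasurableSpace F] [BorelSpace F] (μ : Measure F) [μ.IsAddRightInvariant]
    (x₀ : F) {R : ℝ} (hR : 0 < R) (k : ℕ) :
    ∫⁻ Y in (closedBall x₀ R)ᶜ, ENNReal.ofReal ((dist Y x₀)⁻¹ ^ k) ∂μ ≤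
      ENNReal.ofReal ((1 + R⁻¹) ^ k) * ∫⁻ Y, ENNReal.ofReal ((1 + ‖Y‖) ^ (-(k : ℝ))) ∂μ := by
  calc ∫⁻ Y in (closedBall x₀ R)ᶜ, ENNReal.ofReal ((dist Y x₀)⁻¹ ^ k) ∂μ
      ≤ ∫⁻ Y in (closedBall x₀ R)ᶜ,
          ENNReal.ofReal ((1 + R⁻¹) ^ k) * ENNReal.ofReal ((1 + ‖Y - x₀‖) ^ (-(k : ℝ))) ∂μ := by
        refine setLIntegral_mono' measurableSet_closedBall.compl fun Y hY => ?_
        have hRY : R < dist Y x₀ := by simpa using hY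
        rw [← ENNReal.ofReal_mul (by positivity), ← dist_eq_norm]
        exact ENNReal.ofReal_le_ofReal (inv_pow_le_mul_one_add_rpow_neg hR hRY.le k)
    _ ≤ ∫⁻ Y, ENNReal.ofReal ((1 + R⁻¹) ^ k) *
          ENNReal.ofReal ((1 + ‖Y - x₀‖) ^ (-(k : ℝ))) ∂μ := setLIntegral_le_lintegral _ _
    _ = ENNReal.ofReal ((1 + R⁻¹) ^ k) * ∫⁻ Y, ENNReal.ofReal ((1 + ‖Y‖) ^ (-(k : ℝ))) ∂μ := by
        rw [lintegral_const_mul' _ _ ENNReal.ofReal_ne_top,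
          lintegral_sub_right_eq_self (fun Z => ENNReal.ofReal ((1 + ‖Z‖) ^ (-(k : ℝ)))) x₀]

theorem exists_pos_le_ofReal {a : ℝ≥0∞} (ha : a ≠ ∞) : ∃ C : ℝ, 0 < C ∧ a ≤ ENNReal.ofReal C :=
  ⟨a.toReal + 1, by positivity,
    (ENNReal.le_ofReal_iff_toReal_le ha (by positivity)).mpr (by linarith)⟩

theorem dist_half_le_dist_of_subset_closedBall {X : Type*} [PseudoMetricSpace X] {E : Set X}
    {x₀ Y y : X} {r : ℝ} (hx₀ : E ⊆ closedBall x₀ r) (hY : 2 * r ≤ dist Y x₀) (hy : y ∈ E) :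
    dist Y x₀ / 2 ≤ dist Y y := by
  linarith [dist_triangle Y y x₀, mem_closedBall.mp (hx₀ hy)]

namespace LocalTb

variable {n : ℕ} {E : Set (Amb n)}

theorem sigmaE_eq_zero_of_subsingleton (hn : 1 ≤ n) (hE : E.Subsingleton) : sigmaE n E = 0 := by
  have : NullSingletonClass (μH[(n : ℝ)] : Measure (Amb n)) :=
    Measure.nullSingletonClass_hausdorff _ (by exact_mod_cast hn)
  exact Measure.restrict_eq_zero.mpr (hE.measure_zero _)

theorem IsADR.isFiniteMeasure_sigmaE {CE : ℝ} (hE : IsADR n E CE) (hEb : Bornology.IsBounded E)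
    (hEnt : E.Nontrivial) : IsFiniteMeasure (sigmaE n E) := by
  obtain ⟨hEc, -, hADR⟩ := hE
  obtain ⟨r, -, hr, hrE⟩ := ENNReal.lt_iff_exists_real_btwn.mp (ediam_pos_iff.mpr hEnt)
  have hr : 0 < r := ENNReal.ofReal_pos.mp hr
  have hσE : sigmaE n E E < ∞ := IsCompact.measure_lt_top_of_nhdsWithin
    (hEb.isCompact_closure.of_isClosed_subset hEc subset_closure) fun x hx =>
      ⟨ball x r, mem_nhdsWithin_of_mem_nhds (ball_mem_nhds x hr),
        (hADR x hx r hr hrE).2.trans_lt ENNReal.ofReal_lt_top⟩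
  rw [sigmaE, Measure.restrict_apply_self] at hσE
  exact isFiniteMeasure_restrict.mpr hσE.ne

theorem enorm_Theta_le {ψ : Amb n → Amb n → ℂ} (f : Amb n → ℂ) {X : Amb n} {K : ℝ}
    (hEm : MeasurableSet E) (hK : ∀ y ∈ E, ‖ψ X y‖ ≤ K) :
    ‖Theta n E ψ f X‖ₑ ≤ ENNReal.ofReal K * ∫⁻ y, ‖f y‖ₑ ∂sigmaE n E := by
  rw [← lintegral_const_mul' _ _ ENNReal.ofReal_ne_top]
  refine (enorm_integral_le_lintegral_enorm _).trans (lintegral_mono_ae ?_)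
  filter_upwards [ae_restrict_mem hEm] with y hy
  rw [enorm_mul, ← ofReal_norm]
  gcongr
  exact hK y hy

theorem KernelCond.norm_le_div_dist_pow {ψ : Amb n → Amb n → ℂ} {α Cψ : ℝ}
    (hψ : KernelCond n E ψ α Cψ) {X y : Amb n} (hX : X ∉ E) (hy : y ∈ E) :
    ‖ψ X y‖ ≤ Cψ / dist X y ^ n := by
  obtain ⟨hα, hCψ, -, hsize, -⟩ := hψ
  have hd : 0 < dist X y := dist_pos.mpr fun h => hX (h ▸ hy)
  calc ‖ψ X y‖ ≤ Cψ * del E X ^ α / dist X y ^ ((n : ℝ) + α) := hsize X hX y hy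
    _ ≤ Cψ * dist X y ^ α / dist X y ^ ((n : ℝ) + α) := by
        gcongr
        · exact infDist_nonneg
        · exact infDist_le_dist_of_mem hy
    _ = Cψ / dist X y ^ n := by
        rw [Real.rpow_add hd, Real.rpow_natCast, mul_comm (_ ^ n), mul_comm Cψ,
          mul_div_mul_left _ _ (Real.rpow_pos_of_pos hd α).ne']

theorem enorm_Theta_sq_div_del_le {ψ : Amb n → Amb n → ℂ} {α Cψ : ℝ}
    (hψ : KernelCond n E ψ α Cψ) (hEm : MeasurableSet E) (hne : E.Nonempty) (f : Amb n → ℂ)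
    {x₀ Y : Amb n} {r : ℝ} (hx₀ : E ⊆ closedBall x₀ r) (hY : 2 * r < dist Y x₀) :
    ‖Theta n E ψ f Y‖ₑ ^ 2 / ENNReal.ofReal (del E Y) ≤
      ENNReal.ofReal (2 ^ (2 * n + 1) * Cψ ^ 2) * (∫⁻ y, ‖f y‖ₑ ∂sigmaE n E) ^ 2 *
        ENNReal.ofReal ((dist Y x₀)⁻¹ ^ (2 * n + 1)) := by
  obtain ⟨y₀, hy₀⟩ := hne
  set D := dist Y x₀
  have hr : 0 ≤ r := dist_nonneg.trans (mem_closedBall.mp (hx₀ hy₀))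
  have hD : 0 < D := by linarith
  have hCψ : 0 ≤ Cψ := hψ.2.1.le
  have hfar : ∀ y ∈ E, D / 2 ≤ dist Y y := fun y hy =>
    dist_half_le_dist_of_subset_closedBall hx₀ hY.le hy
  have hYE : Y ∉ E := fun hYE => by linarith [mem_closedBall.mp (hx₀ hYE)]
  have hψY : ∀ y ∈ E, ‖ψ Y y‖ ≤ 2 ^ n * Cψ * D⁻¹ ^ n := fun y hy =>
    calc ‖ψ Y y‖ ≤ Cψ / dist Y y ^ n := hψ.norm_le_div_dist_pow hYE hy
      _ ≤ Cψ / (D / 2) ^ n := by gcongr; exact hfar y hy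
      _ = 2 ^ n * Cψ * D⁻¹ ^ n := by
          rw [div_pow, div_div_eq_mul_div, inv_pow, div_eq_mul_inv]
          ring
  have hδ : D / 2 ≤ del E Y := (le_infDist ⟨y₀, hy₀⟩).mpr hfar
  set I := ∫⁻ y, ‖f y‖ₑ ∂sigmaE n E
  calc ‖Theta n E ψ f Y‖ₑ ^ 2 / ENNReal.ofReal (del E Y)
      ≤ (ENNReal.ofReal (2 ^ n * Cψ * D⁻¹ ^ n) * I) ^ 2 / ENNReal.ofReal (D / 2) := by
        gcongr
        exact enorm_Theta_le f hEm hψY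
    _ = ENNReal.ofReal ((2 ^ n * Cψ * D⁻¹ ^ n) ^ 2 / (D / 2)) * I ^ 2 := by
        rw [ENNReal.ofReal_div_of_pos (half_pos hD), ENNReal.ofReal_pow (by positivity), mul_pow,
          ENNReal.div_eq_inv_mul, ENNReal.div_eq_inv_mul]
        ring
    _ = ENNReal.ofReal (2 ^ (2 * n + 1) * Cψ ^ 2 * D⁻¹ ^ (2 * n + 1)) * I ^ 2 := by
        congr 2
        rw [div_div_eq_mul_div, div_eq_mul_inv]
        ring
    _ = _ := by
        rw [ENNReal.ofReal_mul (by positivity)]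
        ring

theorem setLIntegral_compl_closedBall_enorm_Theta_sq_div_del_le {ψ : Amb n → Amb n → ℂ}
    {α Cψ : ℝ} (hψ : KernelCond n E ψ α Cψ) (hEm : MeasurableSet E) (hne : E.Nonempty)
    (f : Amb n → ℂ) {x₀ : Amb n} {r R : ℝ} (hx₀ : E ⊆ closedBall x₀ r) (hrR : 2 * r ≤ R) :
    ∫⁻ Y in (closedBall x₀ R)ᶜ, ‖Theta n E ψ f Y‖ₑ ^ 2 / ENNReal.ofReal (del E Y) ≤
      ENNReal.ofReal (2 ^ (2 * n + 1) * Cψ ^ 2) * (∫⁻ y, ‖f y‖ₑ ∂sigmaE n E) ^ 2 *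
        ∫⁻ Y in (closedBall x₀ R)ᶜ, ENNReal.ofReal ((dist Y x₀)⁻¹ ^ (2 * n + 1)) := by
  rw [← lintegral_const_mul _ (by fun_prop)]
  refine setLIntegral_mono' measurableSet_closedBall.compl fun Y hY => ?_
  have hRY : R < dist Y x₀ := by simpa using hY
  exact enorm_Theta_sq_div_del_le hψ hEm hne f hx₀ (by linarith)

theorem far_away_square_function_bounded
    {n : ℕ} (hn : 1 ≤ n) {E : Set (Amb n)} {CE : ℝ} (hE : IsADR n E CE)
    (hEb : Bornology.IsBounded E)
    {ψ : Amb n → Amb n → ℂ} {α Cψ : ℝ} (hψ : KernelCond n E ψ α Cψ) :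
    ∃ C : ℝ, 0 < C ∧ ∀ x₀ : Amb n, E ⊆ closedBall x₀ (Metric.diam E) →
      ∀ f : Amb n → ℂ, MemLp f 2 (sigmaE n E) →
        ∫⁻ Y in (closedBall x₀ (8 * Metric.diam E))ᶜ,
            (‖Theta n E ψ f Y‖₊ : ℝ≥0∞) ^ 2 / ENNReal.ofReal (del E Y) ∂volume ≤
          ENNReal.ofReal C * ∫⁻ x, (‖f x‖₊ : ℝ≥0∞) ^ 2 ∂(sigmaE n E) := by
  simp_rw [← enorm_eq_nnnorm]
  rcases E.subsingleton_or_nontrivial with hEs | hEnt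
  · refine ⟨1, one_pos, fun x₀ _ f _ => ?_⟩
    simp [Theta, sigmaE_eq_zero_of_subsingleton hn hEs]
  have := hE.isFiniteMeasure_sigmaE hEb hEnt
  have hdiam : 0 < diam E := diam_pos hEnt hEb
  set k := 2 * n + 1
  set T := ∫⁻ Y : Amb n, ENNReal.ofReal ((1 + ‖Y‖) ^ (-(k : ℝ)))
  have hT : T < ∞ := finite_integral_one_add_norm (by simp [k]; norm_cast; omega)
  obtain ⟨C, hC, hM⟩ := exists_pos_le_ofReal (a := ENNReal.ofReal (2 ^ k * Cψ ^ 2) *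
    sigmaE n E univ * (ENNReal.ofReal ((1 + (8 * diam E)⁻¹) ^ k) * T)) (by finiteness)
  refine ⟨C, hC, fun x₀ hx₀ f hf => ?_⟩
  calc _ ≤ _ := setLIntegral_compl_closedBall_enorm_Theta_sq_div_del_le hψ hE.1.measurableSet
          hEnt.nonempty f hx₀ (by linarith)
    _ ≤ ENNReal.ofReal (2 ^ k * Cψ ^ 2) * (sigmaE n E univ * ∫⁻ y, ‖f y‖ₑ ^ 2 ∂sigmaE n E) *
          (ENNReal.ofReal ((1 + (8 * diam E)⁻¹) ^ k) * T) := by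
        gcongr
        · exact sq_lintegral_le_measure_univ_mul_lintegral_sq _ hf.1.enorm
        · exact setLIntegral_compl_closedBall_inv_dist_pow_le volume x₀ (by positivity) k
    _ ≤ ENNReal.ofReal C * ∫⁻ y, ‖f y‖ₑ ^ 2 ∂sigmaE n E :=
        (mul_le_mul_left hM _).trans_eq' (by ring)

end LocalTb
end
end
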